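/- arXiv:0911.3352 — 4 statements merged into one kernel-verified Lean document; each statement's English description precedes it below -/
import Mathlib

section
/- For a set of n points lying on a convex arc spanned by one edge of a bounding triangle (so that the relevant region is a convex polygon with n+2 vertices), the probability that a fixed interior point has degree 3 in a uniformly random triangulation equals C_{n-1}/C_n = (n+1)/(2(2n-1)) = 1/4 + O(1/n), hence the expected number of degree-3 vertices is n/4 + O(1). -/
/-- `d` is a diagonal of the convex polygon with vertices `0, 1, …, n-1`
(listed in cyclic order): an unordered pair, normalized as `d.1 < d.2`, of
non-adjacent vertices. -/
def IsDiag (n : ℕ) (d : ℕ × ℕ) : Prop :=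
  d.1 + 1 < d.2 ∧ d.2 < n ∧ ¬(d.1 = 0 ∧ d.2 = n - 1)

/-- Two diagonals of a convex polygon *cross* (meet in an interior point)
exactly when their endpoints interleave in the cyclic order. -/
def Crosses (d e : ℕ × ℕ) : Prop :=
  (d.1 < e.1 ∧ e.1 < d.2 ∧ d.2 < e.2) ∨ (e.1 < d.1 ∧ d.1 < e.2 ∧ e.2 < d.2)

/-- A *triangulation* of the convex polygon with `n` vertices: a maximal set
of pairwise non-crossing diagonals. -/
def IsPolygonTriangulation (n : ℕ) (D : Finset (ℕ × ℕ)) : Prop :=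
  (∀ d ∈ D, IsDiag n d) ∧ (∀ d ∈ D, ∀ e ∈ D, ¬ Crosses d e) ∧
    ∀ d : ℕ × ℕ, IsDiag n d → (∀ e ∈ D, ¬ Crosses d e) → d ∈ D

/-!
In a triangulation of the convex polygon `0, …, m - 1`, the edge `(0, m - 1)` lies in a triangle
whose apex `c` is the last neighbour of `0`. No diagonal passes over `c`, so cutting along
`(0, c)` and `(c, m - 1)` splits the triangulation into triangulations of the polygons
`0, …, c` and `c, …, m - 1`, and every such pair glues back. This is the Catalan recursion,
hence the `(n + 2)`-gon has `C n` triangulations.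

A vertex `k` of the arc meets no diagonal exactly when the ear diagonal `(k - 1, k + 1)` is
present; deleting `k` then identifies these triangulations with those of the `(n + 1)`-gon, of
which there are `C (n - 1)`. Finally `(n + 2) C (n + 1) = 2 (2n + 1) C n` gives
`C (n - 1) / C n = (n + 1) / (2 (2n - 1)) = 1/4 + 3 / (4 (2n - 1))`.
-/

namespace PolygonTriangulation

open Finset

open scoped Classical in
noncomputable def triangulations (m : ℕ) : Finset (Finset (ℕ × ℕ)) :=
  ((range m ×ˢ range m).powerset).filter (IsPolygonTriangulation m)

theorem mem_triangulations {m : ℕ} {D : Finset (ℕ × ℕ)} :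
    D ∈ triangulations m ↔ IsPolygonTriangulation m D := by
  classical
  refine ⟨fun h => (mem_filter.1 h).2, fun h => mem_filter.2 ⟨mem_powerset.2 fun d hd => ?_, h⟩⟩
  have := h.1 d hd
  simp only [IsDiag] at this
  simp only [mem_product, mem_range]
  omega

theorem triangulations_of_le_three {m : ℕ} (hm : m ≤ 3) : triangulations m = {∅} := by
  have no_diag : ∀ d, ¬ IsDiag m d := fun d => by simp only [IsDiag]; omega
  ext D
  simp only [mem_triangulations, mem_singleton]
  refine ⟨fun h => eq_empty_of_forall_notMem fun d hd => no_diag d (h.1 d hd), ?_⟩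
  rintro rfl
  exact ⟨by simp, by simp, fun d hd _ => absurd hd (no_diag d)⟩

theorem crosses_map_iff {f : ℕ → ℕ} (hf : StrictMono f) {d e : ℕ × ℕ} :
    Crosses (Prod.map f f d) (Prod.map f f e) ↔ Crosses d e := by
  simp only [Crosses, Prod.map_fst, Prod.map_snd, hf.lt_iff_lt]

def shift (c : ℕ) (d : ℕ × ℕ) : ℕ × ℕ := (d.1 + c, d.2 + c)

theorem shift_injective (c : ℕ) : Function.Injective (shift c) :=
  Prod.map_injective.2 ⟨add_left_injective c, add_left_injective c⟩

theorem exists_shift_eq {c : ℕ} {d : ℕ × ℕ} (h1 : c ≤ d.1) (h2 : c ≤ d.2) :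
    ∃ b, shift c b = d :=
  ⟨(d.1 - c, d.2 - c), by ext <;> simp only [shift] <;> omega⟩

theorem crosses_shift_iff {c : ℕ} {d e : ℕ × ℕ} : Crosses (shift c d) (shift c e) ↔ Crosses d e :=
  crosses_map_iff fun _ _ h => Nat.add_lt_add_right h c

/-- The triangulation of the `(i + j + 3)`-gon whose triangle on the edge `(0, i + j + 2)` has
apex `i + 1`, made of `A` on the polygon `0, …, i + 1` and of `B`, shifted by `i + 1`, on the
polygon `i + 1, …, i + j + 2`. -/
noncomputable def glue (i j : ℕ) (p : Finset (ℕ × ℕ) × Finset (ℕ × ℕ)) : Finset (ℕ × ℕ) :=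
  p.1 ∪ p.2.image (shift (i + 1)) ∪ (if 1 ≤ i then {(0, i + 1)} else ∅) ∪
    (if 1 ≤ j then {(i + 1, i + j + 2)} else ∅)

theorem mem_glue {i j : ℕ} {p : Finset (ℕ × ℕ) × Finset (ℕ × ℕ)} {d : ℕ × ℕ} :
    d ∈ glue i j p ↔ d ∈ p.1 ∨ (∃ b ∈ p.2, shift (i + 1) b = d) ∨
      (1 ≤ i ∧ d = (0, i + 1)) ∨ (1 ≤ j ∧ d = (i + 1, i + j + 2)) := by
  unfold glue
  split_ifs with hi hj hj <;>
    simp only [mem_union, mem_image, mem_singleton, notMem_empty, hi, hj, true_and, false_and,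
      or_false, false_or, or_assoc]

section Glue

variable {i j : ℕ} {A B : Finset (ℕ × ℕ)}

theorem isDiag_of_mem_glue (hA : ∀ a ∈ A, IsDiag (i + 2) a) (hB : ∀ b ∈ B, IsDiag (j + 2) b)
    {d : ℕ × ℕ} (hd : d ∈ glue i j (A, B)) : IsDiag (i + j + 3) d := by
  rcases mem_glue.1 hd with hd | ⟨b, hb, rfl⟩ | ⟨hi, rfl⟩ | ⟨hj, rfl⟩
  · have := hA d hd; simp only [IsDiag] at this ⊢; omega
  · have := hB b hb; simp only [IsDiag, shift] at this ⊢; omega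
  all_goals simp only [IsDiag]; omega

theorem not_crosses_of_mem_glue (hA : IsPolygonTriangulation (i + 2) A)
    (hB : IsPolygonTriangulation (j + 2) B) {d e : ℕ × ℕ} (hd : d ∈ glue i j (A, B))
    (he : e ∈ glue i j (A, B)) : ¬ Crosses d e := by
  rcases mem_glue.1 hd with hd | ⟨a, ha, rfl⟩ | ⟨-, rfl⟩ | ⟨-, rfl⟩ <;>
  rcases mem_glue.1 he with he | ⟨b, hb, rfl⟩ | ⟨-, rfl⟩ | ⟨-, rfl⟩
  -- Two diagonals from different parts never cross, since none of them passes over `i + 1`.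
  all_goals first
    | exact hA.2.1 d hd e he
    | exact crosses_shift_iff.not.2 (hB.2.1 a ha b hb)
    | skip
  all_goals
    (try have := hA.1 d hd); (try have := hA.1 e he); (try have := hB.1 a ha);
    (try have := hB.1 b hb)
    simp only [IsDiag, Crosses, shift] at *
    omega

theorem mem_glue_of_forall_not_crosses (hA : IsPolygonTriangulation (i + 2) A)
    (hB : IsPolygonTriangulation (j + 2) B) {d : ℕ × ℕ} (hd : IsDiag (i + j + 3) d)
    (hnc : ∀ e ∈ glue i j (A, B), ¬ Crosses d e) : d ∈ glue i j (A, B) := by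
  have hd' := hd
  simp only [IsDiag] at hd'
  rcases le_or_gt d.2 (i + 1) with h2 | h2
  · by_cases hsep : d = (0, i + 1)
    · exact mem_glue.2 (.inr (.inr (.inl ⟨by subst hsep; omega, hsep⟩)))
    · refine mem_glue.2 (.inl (hA.2.2 d ?_ fun e he => hnc e (mem_glue.2 (.inl he))))
      simp only [IsDiag, Prod.ext_iff] at hsep ⊢
      omega
  rcases le_or_gt (i + 1) d.1 with h1 | h1
  · by_cases hsep : d = (i + 1, i + j + 2)
    · exact mem_glue.2 (.inr (.inr (.inr ⟨by subst hsep; omega, hsep⟩)))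
    obtain ⟨b, rfl⟩ := exists_shift_eq h1 (by omega)
    refine mem_glue.2 (.inr (.inl ⟨b, hB.2.2 b ?_ fun e he => ?_, rfl⟩))
    · simp only [IsDiag, shift, Prod.ext_iff] at hsep hd' ⊢
      omega
    · rw [← crosses_shift_iff]
      exact hnc _ (mem_glue.2 (.inr (.inl ⟨e, he, rfl⟩)))
  · exfalso
    rcases Nat.eq_zero_or_pos d.1 with h0 | h0
    · exact hnc (i + 1, i + j + 2) (mem_glue.2 (.inr (.inr (.inr ⟨by omega, rfl⟩))))
        (by simp only [Crosses]; omega)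
    · exact hnc (0, i + 1) (mem_glue.2 (.inr (.inr (.inl ⟨by omega, rfl⟩))))
        (by simp only [Crosses]; omega)

theorem isPolygonTriangulation_glue (hA : IsPolygonTriangulation (i + 2) A)
    (hB : IsPolygonTriangulation (j + 2) B) :
    IsPolygonTriangulation (i + j + 3) (glue i j (A, B)) :=
  ⟨fun _ hd => isDiag_of_mem_glue hA.1 hB.1 hd,
    fun _ hd _ he => not_crosses_of_mem_glue hA hB hd he,
    fun _ hd hnc => mem_glue_of_forall_not_crosses hA hB hd hnc⟩

end Glue

/-- The apex of the triangle on the edge `(0, m - 1)`: the largest neighbour of `0` below `m - 1`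
(the neighbour `1` when no diagonal leaves `0`). -/
def apex (D : Finset (ℕ × ℕ)) : ℕ :=
  max 1 ((D.filter fun d => d.1 = 0).sup Prod.snd)

section Apex

variable {m : ℕ} {D : Finset (ℕ × ℕ)}

theorem one_le_apex (D : Finset (ℕ × ℕ)) : 1 ≤ apex D :=
  le_max_left _ _

theorem le_apex {c : ℕ} (h : (0, c) ∈ D) : c ≤ apex D :=
  le_max_of_le_right <|
    le_sup (f := Prod.snd) (s := D.filter fun d => d.1 = 0) (mem_filter.2 ⟨h, rfl⟩)

theorem apex_mem (h : 2 ≤ apex D) : (0, apex D) ∈ D := by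
  have hne : (D.filter fun d => d.1 = 0).Nonempty := by
    rw [nonempty_iff_ne_empty]
    intro h0
    simp [apex, h0] at h
  obtain ⟨d, hd, hsup⟩ := exists_mem_eq_sup _ hne Prod.snd
  obtain ⟨hdD, hd0⟩ := mem_filter.1 hd
  have : apex D = d.2 := by rw [apex, hsup] at h ⊢; omega
  rwa [this, ← hd0]

theorem apex_add_two_le (hD : IsPolygonTriangulation m D) (hm : 3 ≤ m) : apex D + 2 ≤ m := by
  by_cases h : 2 ≤ apex D
  · have := hD.1 _ (apex_mem h)
    simp only [IsDiag, true_and] at this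
    omega
  · omega

theorem snd_le_apex_or_apex_le_fst (hD : IsPolygonTriangulation m D) {d : ℕ × ℕ} (hd : d ∈ D) :
    d.2 ≤ apex D ∨ apex D ≤ d.1 := by
  by_contra! h
  have := hD.1 d hd
  simp only [IsDiag] at this
  rcases Nat.eq_zero_or_pos d.1 with h0 | h0
  · have := le_apex (D := D) (c := d.2) (by rw [← h0]; exact hd)
    omega
  · exact hD.2.1 d hd _ (apex_mem (by omega)) (.inr (by simp only; omega))

theorem apex_last_mem (hD : IsPolygonTriangulation m D) (h : apex D + 2 < m) :
    (apex D, m - 1) ∈ D := by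
  have := one_le_apex D
  refine hD.2.2 _ (by simp only [IsDiag]; omega) fun e he hcr => ?_
  have := hD.1 e he
  simp only [IsDiag] at this
  rcases snd_le_apex_or_apex_le_fst hD he with h' | h' <;> simp only [Crosses] at hcr <;> omega

end Apex

noncomputable def leftPart (i : ℕ) (D : Finset (ℕ × ℕ)) : Finset (ℕ × ℕ) :=
  (D.filter fun d => d.2 ≤ i + 1).erase (0, i + 1)

noncomputable def rightPart (i j : ℕ) (D : Finset (ℕ × ℕ)) : Finset (ℕ × ℕ) :=
  (D.preimage (shift (i + 1)) (shift_injective _).injOn).erase (0, j + 1)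

section Split

variable {i j : ℕ} {A B D : Finset (ℕ × ℕ)}

theorem mem_leftPart {d : ℕ × ℕ} : d ∈ leftPart i D ↔ d ∈ D ∧ d.2 ≤ i + 1 ∧ d ≠ (0, i + 1) := by
  rw [leftPart, mem_erase, mem_filter]
  tauto

theorem mem_rightPart {b : ℕ × ℕ} :
    b ∈ rightPart i j D ↔ shift (i + 1) b ∈ D ∧ b ≠ (0, j + 1) := by
  rw [rightPart, mem_erase, mem_preimage]
  tauto

theorem isPolygonTriangulation_leftPart (hD : IsPolygonTriangulation (i + j + 3) D)
    (hc : apex D = i + 1) : IsPolygonTriangulation (i + 2) (leftPart i D) := by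
  refine ⟨fun d hd => ?_, fun d hd e he => hD.2.1 d (mem_leftPart.1 hd).1 e (mem_leftPart.1 he).1,
    fun d hd hnc => ?_⟩
  · obtain ⟨hdD, h2, hne⟩ := mem_leftPart.1 hd
    have := hD.1 d hdD
    simp only [IsDiag, ne_eq, Prod.ext_iff] at this hne ⊢
    omega
  · simp only [IsDiag] at hd
    have hdD : d ∈ D := hD.2.2 d (by simp only [IsDiag]; omega) fun e he => by
      by_cases hsep : e = (0, i + 1)
      · subst hsep; simp only [Crosses]; omega
      rcases snd_le_apex_or_apex_le_fst hD he with h | h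
      · exact hnc e (mem_leftPart.2 ⟨he, by omega, hsep⟩)
      · simp only [Crosses]; omega
    exact mem_leftPart.2 ⟨hdD, by omega, by simp only [ne_eq, Prod.ext_iff]; omega⟩

theorem isPolygonTriangulation_rightPart (hD : IsPolygonTriangulation (i + j + 3) D)
    (hc : apex D = i + 1) : IsPolygonTriangulation (j + 2) (rightPart i j D) := by
  refine ⟨fun b hb => ?_, fun b hb b' hb' hcr => ?_, fun b hb hnc => ?_⟩
  · obtain ⟨hbD, hne⟩ := mem_rightPart.1 hb
    have := hD.1 _ hbD
    simp only [IsDiag, shift, ne_eq, Prod.ext_iff] at this hne ⊢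
    omega
  · exact hD.2.1 _ (mem_rightPart.1 hb).1 _ (mem_rightPart.1 hb').1 (crosses_shift_iff.2 hcr)
  · simp only [IsDiag] at hb
    have hbD : shift (i + 1) b ∈ D :=
      hD.2.2 _ (by simp only [IsDiag, shift]; omega) fun e he => by
        have := hD.1 e he
        simp only [IsDiag] at this
        rcases snd_le_apex_or_apex_le_fst hD he with h | h
        · simp only [Crosses, shift]; omega
        obtain ⟨f, rfl⟩ := exists_shift_eq (c := i + 1) (d := e) (by omega) (by omega)
        rw [crosses_shift_iff]
        by_cases hsep : f = (0, j + 1)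
        · subst hsep; simp only [Crosses]; omega
        · exact hnc f (mem_rightPart.2 ⟨he, hsep⟩)
    exact mem_rightPart.2 ⟨hbD, by simp only [ne_eq, Prod.ext_iff]; omega⟩

theorem glue_leftPart_rightPart (hD : IsPolygonTriangulation (i + j + 3) D)
    (hc : apex D = i + 1) : glue i j (leftPart i D, rightPart i j D) = D := by
  ext d
  rw [mem_glue]
  constructor
  · rintro (hd | ⟨b, hb, rfl⟩ | ⟨hi, rfl⟩ | ⟨hj, rfl⟩)
    · exact (mem_leftPart.1 hd).1
    · exact (mem_rightPart.1 hb).1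
    · exact hc ▸ apex_mem (by omega)
    · simpa [hc, show i + j + 3 - 1 = i + j + 2 by omega] using apex_last_mem hD (by omega)
  · intro hd
    have := hD.1 d hd
    simp only [IsDiag] at this
    rcases snd_le_apex_or_apex_le_fst hD hd with h | h
    · by_cases hsep : d = (0, i + 1)
      · exact .inr (.inr (.inl ⟨by subst hsep; omega, hsep⟩))
      · exact .inl (mem_leftPart.2 ⟨hd, by omega, hsep⟩)
    · by_cases hsep : d = (i + 1, i + j + 2)
      · exact .inr (.inr (.inr ⟨by subst hsep; omega, hsep⟩))
      obtain ⟨b, rfl⟩ := exists_shift_eq (c := i + 1) (d := d) (by omega) (by omega)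
      refine .inr (.inl ⟨b, mem_rightPart.2 ⟨hd, ?_⟩, rfl⟩)
      rintro rfl
      exact hsep (by simp only [shift, Prod.ext_iff]; omega)

theorem leftPart_glue (hA : ∀ a ∈ A, IsDiag (i + 2) a) (hB : ∀ b ∈ B, IsDiag (j + 2) b) :
    leftPart i (glue i j (A, B)) = A := by
  ext d
  rw [mem_leftPart, mem_glue]
  constructor
  · rintro ⟨hd | ⟨b, hb, rfl⟩ | ⟨-, rfl⟩ | ⟨hj, rfl⟩, h2, hne⟩
    · exact hd
    · have := hB b hb; simp only [IsDiag, shift] at this h2; omega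
    · exact absurd rfl hne
    · simp only at h2; omega
  · intro hd
    have := hA d hd
    simp only [IsDiag] at this
    exact ⟨.inl hd, by omega, by simp only [ne_eq, Prod.ext_iff]; omega⟩

theorem rightPart_glue (hA : ∀ a ∈ A, IsDiag (i + 2) a) (hB : ∀ b ∈ B, IsDiag (j + 2) b) :
    rightPart i j (glue i j (A, B)) = B := by
  ext b
  rw [mem_rightPart, mem_glue]
  constructor
  · rintro ⟨hb | ⟨b', hb', heq⟩ | ⟨-, heq⟩ | ⟨-, heq⟩, hne⟩
    · have := hA _ hb; simp only [IsDiag, shift] at this; omega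
    · rwa [← shift_injective _ heq]
    · simp only [shift, Prod.ext_iff] at heq; omega
    · simp only [shift, ne_eq, Prod.ext_iff] at heq hne; omega
  · intro hb
    have := hB b hb
    simp only [IsDiag] at this
    exact ⟨.inr (.inl ⟨b, hb, rfl⟩), by simp only [ne_eq, Prod.ext_iff]; omega⟩

theorem apex_glue (hA : ∀ a ∈ A, IsDiag (i + 2) a) : apex (glue i j (A, B)) = i + 1 := by
  refine le_antisymm (max_le (by omega) (Finset.sup_le fun d hd => ?_)) ?_
  · obtain ⟨hd, hd0⟩ := mem_filter.1 hd
    rcases mem_glue.1 hd with hd | ⟨b, -, rfl⟩ | ⟨-, rfl⟩ | ⟨-, rfl⟩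
    · have := hA d hd; simp only [IsDiag] at this; omega
    all_goals simp only [shift] at hd0 ⊢; omega
  · rcases Nat.eq_zero_or_pos i with hi | hi
    · exact hi ▸ one_le_apex _
    · exact le_apex (mem_glue.2 (.inr (.inr (.inl ⟨hi, rfl⟩))))

end Split

theorem triangulations_eq_biUnion (n : ℕ) :
    triangulations (n + 3) = (antidiagonal n).biUnion fun ij =>
      (triangulations (ij.1 + 2) ×ˢ triangulations (ij.2 + 2)).image (glue ij.1 ij.2) := by
  ext D
  simp only [mem_biUnion, mem_image, mem_product, HasAntidiagonal.mem_antidiagonal,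
    mem_triangulations, Prod.exists]
  constructor
  · intro hD
    have := apex_add_two_le hD (by omega)
    obtain ⟨i, hi⟩ : ∃ i, apex D = i + 1 := ⟨apex D - 1, by have := one_le_apex D; omega⟩
    obtain ⟨j, rfl⟩ : ∃ j, n = i + j := ⟨n - i, by omega⟩
    exact ⟨i, j, rfl, leftPart i D, rightPart i j D, ⟨isPolygonTriangulation_leftPart hD hi,
      isPolygonTriangulation_rightPart hD hi⟩, glue_leftPart_rightPart hD hi⟩
  · rintro ⟨i, j, rfl, A, B, ⟨hA, hB⟩, rfl⟩
    exact isPolygonTriangulation_glue hA hB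

theorem glue_injOn (i j : ℕ) :
    Set.InjOn (glue i j) ↑(triangulations (i + 2) ×ˢ triangulations (j + 2)) := by
  rintro ⟨A, B⟩ hAB ⟨A', B'⟩ hAB' h
  simp only [coe_product, Set.mem_prod, mem_coe, mem_triangulations] at hAB hAB'
  have hl := congrArg (leftPart i) h
  have hr := congrArg (rightPart i j) h
  rw [leftPart_glue hAB.1.1 hAB.2.1, leftPart_glue hAB'.1.1 hAB'.2.1] at hl
  rw [rightPart_glue hAB.1.1 hAB.2.1, rightPart_glue hAB'.1.1 hAB'.2.1] at hr
  rw [hl, hr]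

theorem card_triangulations (n : ℕ) : #(triangulations (n + 2)) = catalan n := by
  induction n using Nat.strong_induction_on with
  | _ n ih =>
  cases n with
  | zero => rw [triangulations_of_le_three (by norm_num), card_singleton, catalan_zero]
  | succ n =>
    rw [triangulations_eq_biUnion, card_biUnion, catalan_succ']
    · refine sum_congr rfl fun ij hij => ?_
      have := HasAntidiagonal.mem_antidiagonal.1 hij
      rw [card_image_of_injOn (glue_injOn _ _), card_product, ih _ (by omega), ih _ (by omega)]
    · intro ij hij ij' hij' hne
      refine disjoint_left.2 fun D hD hD' => hne ?_
      simp only [mem_image, mem_product, mem_triangulations] at hD hD'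
      obtain ⟨⟨A, B⟩, ⟨hA, -⟩, rfl⟩ := hD
      obtain ⟨⟨A', B'⟩, ⟨hA', -⟩, h⟩ := hD'
      have := congrArg apex h
      rw [apex_glue hA.1, apex_glue hA'.1] at this
      have := HasAntidiagonal.mem_antidiagonal.1 hij
      have := HasAntidiagonal.mem_antidiagonal.1 hij'
      ext <;> omega

/-- Vertex `v` of the `(n + 1)`-gon, as a vertex of the `(n + 2)`-gon in which a new vertex `k`
has been inserted. -/
def insertVertex (k v : ℕ) : ℕ := if v < k then v else v + 1

def relabel (k : ℕ) : ℕ × ℕ → ℕ × ℕ := Prod.map (insertVertex k) (insertVertex k)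

def ear (k : ℕ) : ℕ × ℕ := (k - 1, k + 1)

section DeleteVertex

variable {n k : ℕ}

theorem insertVertex_strictMono (k : ℕ) : StrictMono (insertVertex k) := fun a b h => by
  unfold insertVertex; split_ifs <;> omega

theorem insertVertex_ne (k v : ℕ) : insertVertex k v ≠ k := by
  unfold insertVertex; split_ifs <;> omega

theorem exists_insertVertex_eq {v : ℕ} (h : v ≠ k) : ∃ u, insertVertex k u = v :=
  ⟨if v < k then v else v - 1, by unfold insertVertex; split_ifs <;> omega⟩

theorem relabel_injective (k : ℕ) : Function.Injective (relabel k) :=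
  have := (insertVertex_strictMono k).injective
  Prod.map_injective.2 ⟨this, this⟩

theorem exists_relabel_eq {d : ℕ × ℕ} (h1 : d.1 ≠ k) (h2 : d.2 ≠ k) : ∃ e, relabel k e = d := by
  obtain ⟨a, ha⟩ := exists_insertVertex_eq h1
  obtain ⟨b, hb⟩ := exists_insertVertex_eq h2
  exact ⟨(a, b), Prod.ext ha hb⟩

theorem crosses_relabel_iff {d e : ℕ × ℕ} : Crosses (relabel k d) (relabel k e) ↔ Crosses d e :=
  crosses_map_iff (insertVertex_strictMono k)

theorem isDiag_relabel_iff (hk1 : 1 ≤ k) (hkn : k ≤ n) {d : ℕ × ℕ} :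
    IsDiag (n + 2) (relabel k d) ∧ relabel k d ≠ ear k ↔ IsDiag (n + 1) d := by
  simp only [IsDiag, relabel, Prod.map_fst, Prod.map_snd, insertVertex, ear, ne_eq, Prod.ext_iff]
  split_ifs <;> (try simp only [false_and, not_false_eq_true, and_true]) <;> omega

theorem not_crosses_ear {d : ℕ × ℕ} (h1 : d.1 ≠ k) (h2 : d.2 ≠ k) :
    ¬ Crosses d (ear k) ∧ ¬ Crosses (ear k) d := by
  simp only [Crosses, ear]
  omega

theorem ear_mem (hk1 : 1 ≤ k) (hkn : k ≤ n) (hn : 2 ≤ n) {D : Finset (ℕ × ℕ)}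
    (hD : IsPolygonTriangulation (n + 2) D) (hav : ∀ e ∈ D, e.1 ≠ k ∧ e.2 ≠ k) : ear k ∈ D :=
  hD.2.2 _ (by simp only [IsDiag, ear]; omega) fun e he =>
    (not_crosses_ear (hav e he).1 (hav e he).2).2

/-- Deletes vertex `k` from a triangulation in which no diagonal meets `k`; the ear diagonal
`ear k` becomes an edge. -/
noncomputable def contract (k : ℕ) (D : Finset (ℕ × ℕ)) : Finset (ℕ × ℕ) :=
  (D.erase (ear k)).preimage (relabel k) (relabel_injective k).injOn

noncomputable def expand (k : ℕ) (E : Finset (ℕ × ℕ)) : Finset (ℕ × ℕ) :=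
  insert (ear k) (E.image (relabel k))

theorem mem_contract {D : Finset (ℕ × ℕ)} {e : ℕ × ℕ} :
    e ∈ contract k D ↔ relabel k e ∈ D ∧ relabel k e ≠ ear k := by
  rw [contract, mem_preimage, mem_erase, and_comm]

theorem isPolygonTriangulation_contract (hk1 : 1 ≤ k) (hkn : k ≤ n) {D : Finset (ℕ × ℕ)}
    (hD : IsPolygonTriangulation (n + 2) D) (hav : ∀ e ∈ D, e.1 ≠ k ∧ e.2 ≠ k) :
    IsPolygonTriangulation (n + 1) (contract k D) := by
  refine ⟨fun d hd => ?_, fun d hd e he hcr => ?_, fun d hd hnc => ?_⟩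
  · obtain ⟨hdD, hne⟩ := mem_contract.1 hd
    exact (isDiag_relabel_iff hk1 hkn).1 ⟨hD.1 _ hdD, hne⟩
  · exact hD.2.1 _ (mem_contract.1 hd).1 _ (mem_contract.1 he).1 (crosses_relabel_iff.2 hcr)
  · obtain ⟨hd', hne⟩ := (isDiag_relabel_iff hk1 hkn).2 hd
    refine mem_contract.2 ⟨hD.2.2 _ hd' fun e he => ?_, hne⟩
    obtain ⟨e1, e2⟩ := hav e he
    by_cases he' : e = ear k
    · exact he' ▸ (not_crosses_ear (insertVertex_ne k d.1) (insertVertex_ne k d.2)).1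
    · obtain ⟨f, rfl⟩ := exists_relabel_eq e1 e2
      exact crosses_relabel_iff.not.2 (hnc f (mem_contract.2 ⟨he, he'⟩))

theorem isPolygonTriangulation_expand (hk1 : 1 ≤ k) (hkn : k ≤ n) (hn : 2 ≤ n)
    {E : Finset (ℕ × ℕ)} (hE : IsPolygonTriangulation (n + 1) E) :
    IsPolygonTriangulation (n + 2) (expand k E) := by
  have hear : IsDiag (n + 2) (ear k) := by simp only [IsDiag, ear]; omega
  have avoid (e : ℕ × ℕ) : ¬ Crosses (relabel k e) (ear k) ∧ ¬ Crosses (ear k) (relabel k e) :=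
    not_crosses_ear (insertVertex_ne k e.1) (insertVertex_ne k e.2)
  refine ⟨fun d hd => ?_, fun d hd e he => ?_, fun d hd hnc => ?_⟩
  · rcases mem_insert.1 hd with rfl | hd
    · exact hear
    · obtain ⟨e, he, rfl⟩ := mem_image.1 hd
      exact ((isDiag_relabel_iff hk1 hkn).2 (hE.1 e he)).1
  · rcases mem_insert.1 hd with rfl | hd <;> rcases mem_insert.1 he with rfl | he
    · simp only [Crosses]; omega
    · obtain ⟨e, -, rfl⟩ := mem_image.1 he
      exact (avoid e).2
    · obtain ⟨d, -, rfl⟩ := mem_image.1 hd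
      exact (avoid d).1
    · obtain ⟨a, ha, rfl⟩ := mem_image.1 hd
      obtain ⟨b, hb, rfl⟩ := mem_image.1 he
      exact crosses_relabel_iff.not.2 (hE.2.1 a ha b hb)
  · by_cases hne : d = ear k
    · exact hne ▸ mem_insert_self _ _
    -- `d` does not meet `k`, for it would then cross `ear k`.
    have hcr := hnc _ (mem_insert_self _ _)
    have hd' := hd
    simp only [IsDiag, Crosses, ear, Prod.ext_iff] at hd' hcr hne
    obtain ⟨d', rfl⟩ := exists_relabel_eq (k := k) (d := d) (by omega) (by omega)
    refine mem_insert_of_mem (mem_image_of_mem _ (hE.2.2 d' ?_ fun e he => ?_))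
    · exact (isDiag_relabel_iff hk1 hkn).1 ⟨hd, by simp only [ear, ne_eq, Prod.ext_iff]; omega⟩
    · exact crosses_relabel_iff.not.1 (hnc _ (mem_insert_of_mem (mem_image_of_mem _ he)))

theorem expand_avoids (hk1 : 1 ≤ k) (E : Finset (ℕ × ℕ)) :
    ∀ e ∈ expand k E, e.1 ≠ k ∧ e.2 ≠ k := by
  intro e he
  rcases mem_insert.1 he with rfl | he
  · simp only [ear]; omega
  · obtain ⟨e, -, rfl⟩ := mem_image.1 he
    exact ⟨insertVertex_ne k e.1, insertVertex_ne k e.2⟩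

theorem contract_expand (hk1 : 1 ≤ k) (hkn : k ≤ n) {E : Finset (ℕ × ℕ)}
    (hE : ∀ e ∈ E, IsDiag (n + 1) e) : contract k (expand k E) = E := by
  ext e
  rw [mem_contract, expand, mem_insert, (relabel_injective k).mem_finset_image]
  refine ⟨fun h => h.1.resolve_left h.2, fun he => ⟨.inr he, ?_⟩⟩
  exact ((isDiag_relabel_iff hk1 hkn).2 (hE e he)).2

theorem expand_contract (hk1 : 1 ≤ k) (hkn : k ≤ n) (hn : 2 ≤ n) {D : Finset (ℕ × ℕ)}
    (hD : IsPolygonTriangulation (n + 2) D) (hav : ∀ e ∈ D, e.1 ≠ k ∧ e.2 ≠ k) :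
    expand k (contract k D) = D := by
  ext d
  rw [expand, mem_insert, mem_image]
  constructor
  · rintro (rfl | ⟨e, he, rfl⟩)
    · exact ear_mem hk1 hkn hn hD hav
    · exact (mem_contract.1 he).1
  · intro hd
    by_cases hne : d = ear k
    · exact .inl hne
    obtain ⟨e, rfl⟩ := exists_relabel_eq (hav d hd).1 (hav d hd).2
    exact .inr ⟨e, mem_contract.2 ⟨hd, hne⟩, rfl⟩

end DeleteVertex

noncomputable def avoiding (n k : ℕ) : Finset (Finset (ℕ × ℕ)) :=
  (triangulations (n + 2)).filter fun D => ∀ e ∈ D, e.1 ≠ k ∧ e.2 ≠ k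

theorem mem_avoiding {n k : ℕ} {D : Finset (ℕ × ℕ)} :
    D ∈ avoiding n k ↔ IsPolygonTriangulation (n + 2) D ∧ ∀ e ∈ D, e.1 ≠ k ∧ e.2 ≠ k := by
  rw [avoiding, mem_filter, mem_triangulations]

theorem card_avoiding {n k : ℕ} (hk1 : 1 ≤ k) (hkn : k ≤ n) :
    #(avoiding n k) = catalan (n - 1) := by
  obtain rfl | hn : n = 1 ∨ 2 ≤ n := by omega
  · rw [avoiding, triangulations_of_le_three le_rfl, filter_singleton,
      if_pos fun e he => absurd he (notMem_empty e), card_singleton, catalan_zero]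
  obtain ⟨n, rfl⟩ : ∃ m, n = m + 1 := ⟨n - 1, by omega⟩
  rw [Nat.add_sub_cancel, ← card_triangulations]
  refine card_nbij' (contract k) (expand k) (fun D hD => ?_) (fun E hE => ?_)
    (fun D hD => ?_) (fun E hE => ?_)
  · obtain ⟨hD, hav⟩ := mem_avoiding.1 hD
    exact mem_triangulations.2 (isPolygonTriangulation_contract hk1 hkn hD hav)
  · exact mem_avoiding.2
      ⟨isPolygonTriangulation_expand hk1 hkn hn (mem_triangulations.1 hE), expand_avoids hk1 E⟩
  · obtain ⟨hD, hav⟩ := mem_avoiding.1 hD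
    exact expand_contract hk1 hkn hn hD hav
  · exact contract_expand hk1 hkn (mem_triangulations.1 hE).1

theorem natCard_isPolygonTriangulation (n : ℕ) :
    Nat.card {D : Finset (ℕ × ℕ) // IsPolygonTriangulation (n + 2) D} = catalan n := by
  rw [Nat.card_congr (Equiv.subtypeEquivRight fun _ => mem_triangulations.symm),
    Nat.card_eq_finsetCard, card_triangulations]

theorem natCard_isPolygonTriangulation_avoiding {n k : ℕ} (hk1 : 1 ≤ k) (hkn : k ≤ n) :
    Nat.card {D : Finset (ℕ × ℕ) // IsPolygonTriangulation (n + 2) D ∧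
      ∀ e ∈ D, e.1 ≠ k ∧ e.2 ≠ k} = catalan (n - 1) := by
  rw [Nat.card_congr (Equiv.subtypeEquivRight fun _ => mem_avoiding.symm),
    Nat.card_eq_finsetCard, card_avoiding hk1 hkn]

end PolygonTriangulation

theorem catalan_pos (n : ℕ) : 0 < catalan n :=
  Nat.pos_of_mul_pos_left ((succ_mul_catalan_eq_centralBinom n).symm ▸ n.centralBinom_pos)

theorem add_two_mul_catalan_succ (n : ℕ) :
    (n + 2) * catalan (n + 1) = 2 * (2 * n + 1) * catalan n := by
  refine Nat.eq_of_mul_eq_mul_left n.succ_pos ?_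
  calc (n + 1) * ((n + 2) * catalan (n + 1)) = (n + 1) * (n + 1).centralBinom := by
        rw [← succ_mul_catalan_eq_centralBinom]
    _ = 2 * (2 * n + 1) * n.centralBinom := Nat.succ_mul_centralBinom_succ n
    _ = (n + 1) * (2 * (2 * n + 1) * catalan n) := by
        rw [← succ_mul_catalan_eq_centralBinom]; ring

theorem catalan_pred_div_catalan {n : ℕ} (hn : 1 ≤ n) :
    (catalan (n - 1) : ℝ) / catalan n = (n + 1) / (2 * (2 * n - 1)) := by
  obtain ⟨m, rfl⟩ : ∃ m, n = m + 1 := ⟨n - 1, by omega⟩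
  have key : ((m : ℝ) + 2) * catalan (m + 1) = 2 * (2 * m + 1) * catalan m := by
    exact_mod_cast add_two_mul_catalan_succ m
  have hpos : (0 : ℝ) < catalan (m + 1) := by exact_mod_cast catalan_pos _
  have hden : (0 : ℝ) < 2 * (2 * (m + 1) - 1) := by linarith [m.cast_nonneg (α := ℝ)]
  rw [Nat.add_sub_cancel]
  push_cast
  rw [div_eq_div_iff hpos.ne' hden.ne']
  linear_combination -key

theorem catalan_pred_div_catalan_sub_quarter {n : ℕ} (hn : 1 ≤ n) :
    (catalan (n - 1) : ℝ) / catalan n - 1 / 4 = 3 / (4 * (2 * n - 1)) := by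
  have : (2 * n - 1 : ℝ) ≠ 0 := by linarith [(Nat.one_le_cast (α := ℝ)).2 hn]
  rw [catalan_pred_div_catalan hn, div_sub_div _ _ (mul_ne_zero two_ne_zero this) four_ne_zero,
    div_eq_div_iff (by positivity) (mul_ne_zero four_ne_zero this)]
  ring

theorem abs_catalan_pred_div_catalan_sub_quarter_le {n : ℕ} (hn : 1 ≤ n) :
    |(catalan (n - 1) : ℝ) / catalan n - 1 / 4| ≤ 3 / 4 / n := by
  have : (1 : ℝ) ≤ n := by exact_mod_cast hn
  have : (0 : ℝ) < 2 * n - 1 := by linarith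
  rw [catalan_pred_div_catalan_sub_quarter hn, abs_of_nonneg (by positivity),
    div_le_div_iff₀ (by positivity) (by positivity)]
  nlinarith

theorem abs_mul_catalan_pred_div_catalan_sub_le {n : ℕ} (hn : 1 ≤ n) :
    |(n : ℝ) * ((catalan (n - 1) : ℝ) / catalan n) - n / 4| ≤ 3 / 4 := by
  have hpos : (0 : ℝ) < n := by exact_mod_cast hn
  rw [show (n : ℝ) * ((catalan (n - 1) : ℝ) / catalan n) - n / 4 =
      n * ((catalan (n - 1) : ℝ) / catalan n - 1 / 4) by ring,
    abs_mul, abs_of_pos hpos, ← le_div_iff₀' hpos]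
  exact abs_catalan_pred_div_catalan_sub_quarter_le hn

/-- For `n` points on a convex arc spanned by one edge of a
bounding triangle, the relevant region is a convex polygon with `n + 2`
vertices (`0` and `n+1` being the endpoints of the triangle edge, and
`1, …, n` the arc points); all edges outside it are forced.  An arc point `k`
has degree `3` in a uniformly random triangulation exactly when no diagonal of
the polygon is incident to it.  The probability of this event equals
`C (n-1) / C n = (n+1)/(2(2n-1)) = 1/4 + O(1/n)`; hence the expected number of
degree-`3` arc points is `n/4 + O(1)`. -/
theorem stmt10 :
    (∀ n k : ℕ, 1 ≤ n → 1 ≤ k → k ≤ n →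
      (Nat.card {D : Finset (ℕ × ℕ) // IsPolygonTriangulation (n + 2) D ∧
          ∀ e ∈ D, e.1 ≠ k ∧ e.2 ≠ k} : ℝ) /
        (Nat.card {D : Finset (ℕ × ℕ) // IsPolygonTriangulation (n + 2) D} : ℝ) =
        (catalan (n - 1) : ℝ) / (catalan n : ℝ)) ∧
    (∀ n : ℕ, 1 ≤ n →
      (catalan (n - 1) : ℝ) / (catalan n : ℝ) = ((n : ℝ) + 1) / (2 * (2 * (n : ℝ) - 1))) ∧
    (∃ C : ℝ, 0 < C ∧ ∀ n : ℕ, 1 ≤ n →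
      |(catalan (n - 1) : ℝ) / (catalan n : ℝ) - 1 / 4| ≤ C / (n : ℝ) ∧
      |(n : ℝ) * ((catalan (n - 1) : ℝ) / (catalan n : ℝ)) - (n : ℝ) / 4| ≤ C) := by
  refine ⟨fun n k _ hk1 hkn => ?_, fun n hn => catalan_pred_div_catalan hn, 3 / 4, by norm_num,
    fun n hn => ⟨abs_catalan_pred_div_catalan_sub_quarter_le hn,
      abs_mul_catalan_pred_div_catalan_sub_le hn⟩⟩
  rw [PolygonTriangulation.natCard_isPolygonTriangulation_avoiding hk1 hkn,
    PolygonTriangulation.natCard_isPolygonTriangulation]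
end

section
/- If a vint u can be flipped down to a vint u′ (u →* u′), then supp(u) ≥ supp(u′). -/
attribute [local instance] Classical.propDecidable

noncomputable section

/-- Points of the Euclidean plane. -/
abbrev Pt : Type := ℝ × ℝ

/-- A finite planar point set is in *general position* if no three of its
points are collinear. -/
def GenPos (S : Finset Pt) : Prop :=
  ∀ p ∈ S, ∀ q ∈ S, ∀ r ∈ S, p ≠ q → p ≠ r → q ≠ r →
    ¬ Collinear ℝ ({p, q, r} : Set Pt)

/-- Two closed straight-line segments are *compatible* if they coincide (as
unordered segments) or meet only in common endpoints (i.e. they do not cross,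
nor overlap, nor does an endpoint of one lie in the relative interior of the
other). -/
def SegCompat (e f : Pt × Pt) : Prop :=
  ({e.1, e.2} : Set Pt) = ({f.1, f.2} : Set Pt) ∨
    segment ℝ e.1 e.2 ∩ segment ℝ f.1 f.2 ⊆
      ({e.1, e.2} : Set Pt) ∩ ({f.1, f.2} : Set Pt)

/-- An edge `e` is *admissible* for the point set `S` and the current edge set
`E`: its endpoints are distinct points of `S`, no point of `S` lies in its
relative interior, and it is compatible with every edge of `E`. -/
def Admissible (S : Finset Pt) (E : Finset (Pt × Pt)) (e : Pt × Pt) : Prop :=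
  e.1 ∈ S ∧ e.2 ∈ S ∧ e.1 ≠ e.2 ∧
    (∀ p ∈ S, p ∈ segment ℝ e.1 e.2 → p = e.1 ∨ p = e.2) ∧
    ∀ f ∈ E, SegCompat e f

/-- A *triangulation* of a finite planar point set `S`: a maximal planar
(crossing-free) straight-line graph on `S`.  Edges are recorded as ordered
pairs, symmetrically. -/
structure Triangulation (S : Finset Pt) where
  edges : Finset (Pt × Pt)
  adm : ∀ e ∈ edges, Admissible S edges e
  symm : ∀ e ∈ edges, (e.2, e.1) ∈ edges
  maximal : ∀ e : Pt × Pt, Admissible S edges e → e ∈ edges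

namespace Triangulation

variable {S : Finset Pt}

/-- The undirected edges of a triangulation. -/
def und (T : Triangulation S) : Finset (Finset Pt) :=
  T.edges.image fun e => {e.1, e.2}

/-- The degree (number of neighbours) of a point in a triangulation. -/
def degree (T : Triangulation S) (p : Pt) : ℕ :=
  (T.edges.filter fun e => e.1 = p).card

end Triangulation

/-- `S` has a triangular convex hull with corners `a, b, c ∈ S`. -/
def TriHull (S : Finset Pt) (a b c : Pt) : Prop :=
  a ∈ S ∧ b ∈ S ∧ c ∈ S ∧ a ≠ b ∧ a ≠ c ∧ b ≠ c ∧
    convexHull ℝ (S : Set Pt) = convexHull ℝ ({a, b, c} : Set Pt)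

/-- The interior points of `S` (all points except the three hull corners). -/
def intPts (S : Finset Pt) (a b c : Pt) : Finset Pt :=
  ((S.erase a).erase b).erase c

/-- `vcount S a b c T i` is the number of interior points of degree `i` in the
triangulation `T` (the quantity `v_i(T)`). -/
def vcount (S : Finset Pt) (a b c : Pt) (T : Triangulation S) (i : ℕ) : ℕ :=
  ((intPts S a b c).filter fun p => T.degree p = i).card

/-- A single *down-flip* at the point `p`: the triangulation `T'` is obtained
from `T` by flipping one edge incident to `p` (so exactly one undirected edge
is exchanged, and the degree of `p` drops by one). -/
def FlipStep {S : Finset Pt} (p : Pt) (T T' : Triangulation S) : Prop :=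
  (T.und \ T'.und).card = 1 ∧ (T'.und \ T.und).card = 1 ∧
    T'.degree p + 1 = T.degree p

/-- The vint `(p, T)` *can be flipped down to* `(p, T')`: the reflexive
transitive closure of single down-flips at `p`. -/
def FlipsDown {S : Finset Pt} (p : Pt) : Triangulation S → Triangulation S → Prop :=
  Relation.ReflTransGen (FlipStep p)

/-- The *support* of the vint `(p, T)`: the number of 3-vints it can be
flipped down to. -/
def supp {S : Finset Pt} (p : Pt) (T : Triangulation S) : ℕ :=
  Nat.card {T' : Triangulation S // FlipsDown p T T' ∧ T'.degree p = 3}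

namespace Triangulation

theorem edges_injective {S : Finset Pt} : Function.Injective (edges : Triangulation S → _) := by
  rintro ⟨E, _, _, _⟩ ⟨E', _, _, _⟩ (rfl : E = E')
  rfl

theorem edges_subset_product {S : Finset Pt} (T : Triangulation S) : T.edges ⊆ S ×ˢ S :=
  fun e he => Finset.mem_product.2 ⟨(T.adm e he).1, (T.adm e he).2.1⟩

/-- `supp` is a `Nat.card`, which would be a junk `0` on an infinite type. -/
instance instFinite (S : Finset Pt) : Finite (Triangulation S) :=
  Finite.of_injective (fun T : Triangulation S => (⟨T.edges, T.edges_subset_product⟩ :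
    {E : Finset (Pt × Pt) // E ⊆ S ×ˢ S}))
    fun _ _ h => edges_injective (congrArg Subtype.val h)

end Triangulation

theorem stmt12_general (S : Finset Pt) (p : Pt)
    (T T' : Triangulation S) (h : FlipsDown p T T') :
    supp p T' ≤ supp p T :=
  Nat.card_mono (Set.toFinite _) fun _ hU => ⟨h.trans hU.1, hU.2⟩

/-- If the vint `u = (p, T)` can be flipped down to
`u' = (p, T')`, then `supp u ≥ supp u'`. -/
theorem stmt12 (S : Finset Pt) (a b c : Pt)
    (hgp : GenPos S) (hhull : TriHull S a b c)
    (p : Pt) (hp : p ∈ intPts S a b c)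
    (T T' : Triangulation S) (h : FlipsDown p T T') :
    supp p T' ≤ supp p T :=
  stmt12_general S p T T' h
end
end

section
/- Let P be a convex polygon with n+2 vertices and let r ≤ n/2 pairwise non-adjacent 'forbidden' diagonals be specified, each connecting the two neighbors of a distinct vertex. The number of triangulations of the polygon avoiding all r forbidden diagonals is C_n^{(r)} := Σ_{i=0}^{r} (−1)^i · binomial(r, i) · C_{n−i}. -/
/-- The *ear diagonal* of vertex `k` of the convex polygon with vertices
`0, …, n-1`: the (normalized) diagonal joining the two cyclic neighbours of
`k`. -/
def earDiag (n k : ℕ) : ℕ × ℕ :=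
  if k = 0 then (1, n - 1)
  else if k = n - 1 then (0, n - 2)
  else (k - 1, k + 1)

/-!
Read a finite `V ⊆ ℕ` as a convex polygon. Sorting its triangulations by the apex of the triangle
standing on the side that joins the extreme vertices gives the Catalan recurrence, so `V` has
`C_{#V-2}` triangulations. The triangulations containing the ear diagonal `e` of a vertex `k` are
those of `V` with `k` removed, together with `e`. As the vertices of `K` are pairwise non-adjacent,
removing some of them leaves the ears of the others intact, so the triangulations containing the
ears of `t ⊆ K` number `C_{n-#t}`; inclusion–exclusion over `K` finishes.
-/

open Finset

theorem Finset.card_filter_forall_not_eq_sum {α ι : Type*} [DecidableEq ι] (s : Finset α)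
    (K : Finset ι) (p : ι → α → Prop) [∀ i, DecidablePred (p i)] :
    (#{a ∈ s | ∀ i ∈ K, ¬p i a} : ℤ) =
      ∑ t ∈ K.powerset, (-1 : ℤ) ^ #t * #{a ∈ s | ∀ i ∈ t, p i a} := by
  simp only [card_filter, Nat.cast_sum, Nat.cast_ite, Nat.cast_one, Nat.cast_zero, mul_sum]
  rw [sum_comm]
  refine sum_congr rfl fun a _ => ?_
  have := prod_sub (fun _ => (1 : ℤ)) (fun i => if p i a then 1 else 0) K
  simp only [prod_const_one, mul_one, prod_boole] at this
  rw [← this, ← prod_boole]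
  refine prod_congr rfl fun i _ => ?_
  split_ifs <;> simp

namespace ConvexPolygon

/-- The vertices of `V`, in increasing order, are those of a convex polygon in cyclic order. -/
def IsDiagonal (V : Finset ℕ) (d : ℕ × ℕ) : Prop :=
  d.1 ∈ V ∧ d.2 ∈ V ∧ (∃ c ∈ V, d.1 < c ∧ c < d.2) ∧ ∃ x ∈ V, x < d.1 ∨ d.2 < x

instance (V : Finset ℕ) : DecidablePred (IsDiagonal V) :=
  fun _ => inferInstanceAs (Decidable (_ ∧ _ ∧ _ ∧ _))

structure IsTriangulation (V : Finset ℕ) (D : Finset (ℕ × ℕ)) : Prop where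
  isDiagonal : ∀ d ∈ D, IsDiagonal V d
  not_crosses : ∀ d ∈ D, ∀ e ∈ D, ¬Crosses d e
  mem_of_forall_not_crosses : ∀ d, IsDiagonal V d → (∀ e ∈ D, ¬Crosses d e) → d ∈ D

open Classical in
noncomputable def triangulations (V : Finset ℕ) : Finset (Finset (ℕ × ℕ)) :=
  {D ∈ (V ×ˢ V).powerset | IsTriangulation V D}

variable {V : Finset ℕ} {D : Finset (ℕ × ℕ)} {d e : ℕ × ℕ} {a b j k : ℕ}

theorem mem_triangulations : D ∈ triangulations V ↔ IsTriangulation V D := by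
  classical
  refine mem_filter.trans (and_iff_right_of_imp fun hD => mem_powerset.2 fun d hd => ?_)
  obtain ⟨h1, h2, -⟩ := hD.isDiagonal d hd
  exact mem_product.2 ⟨h1, h2⟩

theorem isPolygonTriangulation_iff {m : ℕ} :
    IsPolygonTriangulation m D ↔ IsTriangulation (range m) D := by
  have hdiag : ∀ d, IsDiag m d ↔ IsDiagonal (range m) d := by
    rintro ⟨d₁, d₂⟩
    simp only [IsDiag, IsDiagonal, mem_range]
    constructor
    · rintro ⟨h1, h2, h3⟩
      refine ⟨by omega, h2, ⟨d₁ + 1, by omega, by omega, by omega⟩, ?_⟩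
      by_cases h0 : d₁ = 0
      · exact ⟨m - 1, by omega, by omega⟩
      · exact ⟨0, by omega, by omega⟩
    · rintro ⟨-, h2, ⟨c, -, hc1, hc2⟩, x, hx, hx'⟩
      omega
  simp only [IsPolygonTriangulation, hdiag]
  exact ⟨fun ⟨h1, h2, h3⟩ => ⟨h1, h2, h3⟩, fun ⟨h1, h2, h3⟩ => ⟨h1, h2, h3⟩⟩

theorem natCard_isPolygonTriangulation {m : ℕ} (P : Finset (ℕ × ℕ) → Prop) [DecidablePred P] :
    Nat.card {D // IsPolygonTriangulation m D ∧ P D} = #{D ∈ triangulations (range m) | P D} := by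
  rw [← Nat.card_eq_finsetCard]
  exact Nat.card_congr (Equiv.subtypeEquivRight fun D => by
    rw [mem_filter, mem_triangulations, isPolygonTriangulation_iff])

theorem IsDiagonal.lt (hd : IsDiagonal V d) : d.1 < d.2 := by
  obtain ⟨-, -, ⟨c, -, h1, h2⟩, -⟩ := hd
  omega

theorem not_crosses_self : ¬Crosses d d := by
  unfold Crosses; omega

theorem not_crosses_of_le (h : d.2 ≤ e.1) : ¬Crosses d e ∧ ¬Crosses e d := by
  unfold Crosses; omega

theorem not_crosses_of_nested (h₁ : e.1 ≤ d.1) (h₂ : d.2 ≤ e.2) : ¬Crosses d e ∧ ¬Crosses e d := by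
  unfold Crosses; omega

/-- `j` is the apex of the triangle of `D` standing on `(a, b)`: each of `(a, j)` and `(j, b)` is
a diagonal in `D` or a side of the polygon. -/
def IsApex (V : Finset ℕ) (D : Finset (ℕ × ℕ)) (a b j : ℕ) : Prop :=
  j ∈ V ∧ a < j ∧ j < b ∧ ((a, j) ∈ D ∨ ¬∃ c ∈ V, a < c ∧ c < j) ∧
    ((j, b) ∈ D ∨ ¬∃ c ∈ V, j < c ∧ c < b)

instance : Decidable (IsApex V D a b j) :=
  inferInstanceAs (Decidable (_ ∧ _ ∧ _ ∧ _ ∧ _))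

theorem IsApex.unique {j' : ℕ} (hD : IsTriangulation V D) (hj : IsApex V D a b j)
    (hj' : IsApex V D a b j') : j = j' := by
  by_contra hne
  wlog hlt : j < j' generalizing j j'
  · exact this hj' hj (Ne.symm hne) (by omega)
  obtain ⟨hjV, haj, -, -, hjb⟩ := hj
  obtain ⟨hj'V, -, hj'b, haj', -⟩ := hj'
  have h₁ : (a, j') ∈ D := haj'.resolve_right (not_not.2 ⟨j, hjV, haj, hlt⟩)
  have h₂ : (j, b) ∈ D := hjb.resolve_right (not_not.2 ⟨j', hj'V, hlt, hj'b⟩)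
  exact hD.not_crosses _ h₁ _ h₂ (Or.inl ⟨haj, hlt, hj'b⟩)

/-- The apex is the largest `j` for which `(a, j)` is a diagonal in `D` or a side. -/
theorem IsTriangulation.exists_isApex (hD : IsTriangulation V D) (ha : IsLeast (V : Set ℕ) a)
    (hb : IsGreatest (V : Set ℕ) b) (hab : ∃ j ∈ V, a < j ∧ j < b) : ∃ j, IsApex V D a b j := by
  obtain ⟨j₀, hj₀, haj₀, hj₀b⟩ := hab
  obtain ⟨m, hm, hmin⟩ := exists_min_image {x ∈ V | a < x ∧ x < b} id
    ⟨j₀, mem_filter.2 ⟨hj₀, haj₀, hj₀b⟩⟩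
  obtain ⟨hmV, ham, hmb⟩ := mem_filter.1 hm
  obtain ⟨j, hjS, hmax⟩ := exists_max_image
    {x ∈ V | a < x ∧ x < b ∧ ((a, x) ∈ D ∨ ¬∃ c ∈ V, a < c ∧ c < x)} id
    ⟨m, mem_filter.2 ⟨hmV, ham, hmb, Or.inr fun ⟨c, hc, hac, hcm⟩ =>
      absurd (hmin c (mem_filter.2 ⟨hc, hac, hcm.trans hmb⟩)) (not_le.2 hcm)⟩⟩
  obtain ⟨hjV, haj, hjb, hside⟩ := mem_filter.1 hjS
  refine ⟨j, hjV, haj, hjb, hside, or_iff_not_imp_right.2 fun hc => ?_⟩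
  refine hD.mem_of_forall_not_crosses _ ⟨hjV, hb.1, not_not.1 hc, a, ha.1, Or.inl haj⟩ ?_
  rintro e he (⟨-, -, h⟩ | ⟨h₁, h₂, h₃⟩)
  · exact absurd (hb.2 (hD.isDiagonal e he).2.1) (not_le.2 h)
  obtain ⟨he₁, he₂, -⟩ := hD.isDiagonal e he
  rcases (ha.2 he₁).eq_or_lt with hae | hae
  · have : (a, e.2) = e := by rw [hae]
    have := hmax e.2 (mem_filter.2 ⟨he₂, by omega, h₃, Or.inl (this ▸ he)⟩)
    exact absurd this (not_le.2 h₂)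
  · rcases hside with haj | hnone
    · exact hD.not_crosses _ haj _ he (Or.inl ⟨hae, h₁, h₂⟩)
    · exact hnone ⟨e.1, he₁, hae, h₁⟩

theorem IsApex.snd_le_or_le_fst (hD : IsTriangulation V D) (ha : a ∈ lowerBounds (V : Set ℕ))
    (hb : b ∈ upperBounds (V : Set ℕ)) (hj : IsApex V D a b j) (hd : d ∈ D) :
    d.2 ≤ j ∨ j ≤ d.1 := by
  obtain ⟨-, haj, hjb, hside₁, hside₂⟩ := hj
  obtain ⟨h₁, h₂, -, x, hx, hx'⟩ := hD.isDiagonal d hd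
  by_contra! h
  have := ha h₁; have := hb h₂; have := ha hx; have := hb hx
  rcases (ha h₁).eq_or_lt with hda | hda
  · have hjb : (j, b) ∈ D := hside₂.resolve_right (not_not.2 ⟨d.2, h₂, h.1, by omega⟩)
    exact hD.not_crosses d hd _ hjb (Or.inl ⟨by omega, h.1, by omega⟩)
  · have haj : (a, j) ∈ D := hside₁.resolve_right (not_not.2 ⟨d.1, h₁, hda, h.2⟩)
    exact hD.not_crosses _ haj d hd (Or.inl ⟨hda, h.2, h.1⟩)

theorem isDiagonal_filter_le_iff (ha : IsLeast (V : Set ℕ) a) (hj : j ∈ V) (hb : b ∈ V)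
    (hjb : j < b) : IsDiagonal {x ∈ V | x ≤ j} d ↔ IsDiagonal V d ∧ d.2 ≤ j ∧ d ≠ (a, j) := by
  simp only [IsDiagonal, mem_filter, ne_eq, Prod.ext_iff]
  constructor
  · rintro ⟨⟨h₁, -⟩, ⟨h₂, h₂j⟩, ⟨c, ⟨hc, -⟩, hc₁, hc₂⟩, x, ⟨hx, hxj⟩, hx'⟩
    have := ha.2 hx
    exact ⟨⟨h₁, h₂, ⟨c, hc, hc₁, hc₂⟩, b, hb, by omega⟩, h₂j, by omega⟩
  · rintro ⟨⟨h₁, h₂, ⟨c, hc, hc₁, hc₂⟩, -⟩, h₂j, hne⟩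
    have := ha.2 h₁
    refine ⟨⟨h₁, by omega⟩, ⟨h₂, h₂j⟩, ⟨c, ⟨hc, by omega⟩, hc₁, hc₂⟩, ?_⟩
    by_cases hda : d.1 = a
    · exact ⟨j, ⟨hj, le_rfl⟩, by omega⟩
    · exact ⟨a, ⟨ha.1, ha.2 hj⟩, by omega⟩

theorem isDiagonal_filter_ge_iff (hb : IsGreatest (V : Set ℕ) b) (hj : j ∈ V) (ha : a ∈ V)
    (haj : a < j) : IsDiagonal {x ∈ V | j ≤ x} d ↔ IsDiagonal V d ∧ j ≤ d.1 ∧ d ≠ (j, b) := by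
  simp only [IsDiagonal, mem_filter, ne_eq, Prod.ext_iff]
  constructor
  · rintro ⟨⟨h₁, h₁j⟩, ⟨h₂, -⟩, ⟨c, ⟨hc, -⟩, hc₁, hc₂⟩, x, ⟨hx, hxj⟩, hx'⟩
    have := hb.2 hx
    exact ⟨⟨h₁, h₂, ⟨c, hc, hc₁, hc₂⟩, a, ha, by omega⟩, h₁j, by omega⟩
  · rintro ⟨⟨h₁, h₂, ⟨c, hc, hc₁, hc₂⟩, -⟩, h₁j, hne⟩
    have := hb.2 h₂
    refine ⟨⟨h₁, h₁j⟩, ⟨h₂, by omega⟩, ⟨c, ⟨hc, by omega⟩, hc₁, hc₂⟩, ?_⟩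
    by_cases hdb : d.2 = b
    · exact ⟨j, ⟨hj, le_rfl⟩, by omega⟩
    · exact ⟨b, ⟨hb.1, hb.2 hj⟩, by omega⟩

theorem IsTriangulation.filter_le (hD : IsTriangulation V D) (ha : IsLeast (V : Set ℕ) a)
    (hb : IsGreatest (V : Set ℕ) b) (hj : IsApex V D a b j) :
    IsTriangulation {x ∈ V | x ≤ j} {d ∈ D | d.2 ≤ j ∧ d ≠ (a, j)} where
  isDiagonal d hd := by
    rw [mem_filter] at hd
    exact (isDiagonal_filter_le_iff ha hj.1 hb.1 hj.2.2.1).2 ⟨hD.isDiagonal d hd.1, hd.2⟩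
  not_crosses d hd e he := hD.not_crosses d (mem_filter.1 hd).1 e (mem_filter.1 he).1
  mem_of_forall_not_crosses d hd hnc := by
    obtain ⟨hdV, hdj, hne⟩ := (isDiagonal_filter_le_iff ha hj.1 hb.1 hj.2.2.1).1 hd
    refine mem_filter.2 ⟨hD.mem_of_forall_not_crosses d hdV fun e he => ?_, hdj, hne⟩
    rcases hj.snd_le_or_le_fst hD ha.2 hb.2 he with hej | hje
    · by_cases hea : e = (a, j)
      · subst hea
        exact (not_crosses_of_nested (ha.2 hdV.1) hdj).1
      · exact hnc e (mem_filter.2 ⟨he, hej, hea⟩)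
    · exact (not_crosses_of_le (hdj.trans hje)).1

theorem IsTriangulation.filter_ge (hD : IsTriangulation V D) (ha : IsLeast (V : Set ℕ) a)
    (hb : IsGreatest (V : Set ℕ) b) (hj : IsApex V D a b j) :
    IsTriangulation {x ∈ V | j ≤ x} {d ∈ D | j ≤ d.1 ∧ d ≠ (j, b)} where
  isDiagonal d hd := by
    rw [mem_filter] at hd
    exact (isDiagonal_filter_ge_iff hb hj.1 ha.1 hj.2.1).2 ⟨hD.isDiagonal d hd.1, hd.2⟩
  not_crosses d hd e he := hD.not_crosses d (mem_filter.1 hd).1 e (mem_filter.1 he).1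
  mem_of_forall_not_crosses d hd hnc := by
    obtain ⟨hdV, hjd, hne⟩ := (isDiagonal_filter_ge_iff hb hj.1 ha.1 hj.2.1).1 hd
    refine mem_filter.2 ⟨hD.mem_of_forall_not_crosses d hdV fun e he => ?_, hjd, hne⟩
    rcases hj.snd_le_or_le_fst hD ha.2 hb.2 he with hej | hje
    · exact (not_crosses_of_le (hej.trans hjd)).2
    · by_cases heb : e = (j, b)
      · subst heb
        exact (not_crosses_of_nested hjd (hb.2 hdV.2.1)).1
      · exact hnc e (mem_filter.2 ⟨he, hje, heb⟩)

def glue (V : Finset ℕ) (a b j : ℕ) (D₁ D₂ : Finset (ℕ × ℕ)) : Finset (ℕ × ℕ) :=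
  D₁ ∪ D₂ ∪ ({(a, j), (j, b)} : Finset (ℕ × ℕ)).filter (IsDiagonal V)

theorem mem_glue {D₁ D₂ : Finset (ℕ × ℕ)} :
    d ∈ glue V a b j D₁ D₂ ↔ d ∈ D₁ ∨ d ∈ D₂ ∨ (d = (a, j) ∨ d = (j, b)) ∧ IsDiagonal V d := by
  simp only [glue, mem_union, mem_filter, mem_insert, mem_singleton, or_assoc]

theorem IsTriangulation.glue {D₁ D₂ : Finset (ℕ × ℕ)} (ha : IsLeast (V : Set ℕ) a)
    (hb : IsGreatest (V : Set ℕ) b) (hj : j ∈ V) (haj : a < j) (hjb : j < b)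
    (h₁ : IsTriangulation {x ∈ V | x ≤ j} D₁) (h₂ : IsTriangulation {x ∈ V | j ≤ x} D₂) :
    IsTriangulation V (glue V a b j D₁ D₂) := by
  have hD₁ : ∀ d ∈ D₁, IsDiagonal V d ∧ a ≤ d.1 ∧ d.2 ≤ j := fun d hd => by
    obtain ⟨hdV, hdj, -⟩ := (isDiagonal_filter_le_iff ha hj hb.1 hjb).1 (h₁.isDiagonal d hd)
    exact ⟨hdV, ha.2 hdV.1, hdj⟩
  have hD₂ : ∀ d ∈ D₂, IsDiagonal V d ∧ j ≤ d.1 ∧ d.2 ≤ b := fun d hd => by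
    obtain ⟨hdV, hjd, -⟩ := (isDiagonal_filter_ge_iff hb hj ha.1 haj).1 (h₂.isDiagonal d hd)
    exact ⟨hdV, hjd, hb.2 hdV.2.1⟩
  refine ⟨fun d hd => ?_, fun d hd e he => ?_, fun d hd hnc => ?_⟩
  · rcases mem_glue.1 hd with hd | hd | ⟨-, hd⟩
    exacts [(hD₁ d hd).1, (hD₂ d hd).1, hd]
  · rcases mem_glue.1 hd with hd | hd | ⟨rfl | rfl, -⟩ <;>
      rcases mem_glue.1 he with he | he | ⟨rfl | rfl, -⟩
    all_goals first
      | exact h₁.not_crosses d hd e he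
      | exact h₂.not_crosses d hd e he
      | (unfold Crosses; grind)
  · by_cases hdj : d.2 ≤ j
    · by_cases hda : d = (a, j)
      · exact mem_glue.2 (Or.inr (Or.inr ⟨Or.inl hda, hd⟩))
      refine mem_glue.2 (Or.inl (h₁.mem_of_forall_not_crosses d ?_ fun e he => ?_))
      · exact (isDiagonal_filter_le_iff ha hj hb.1 hjb).2 ⟨hd, hdj, hda⟩
      · exact hnc e (mem_glue.2 (Or.inl he))
    by_cases hjd : j ≤ d.1
    · by_cases hdb : d = (j, b)
      · exact mem_glue.2 (Or.inr (Or.inr ⟨Or.inr hdb, hd⟩))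
      refine mem_glue.2 (Or.inr (Or.inl (h₂.mem_of_forall_not_crosses d ?_ fun e he => ?_)))
      · exact (isDiagonal_filter_ge_iff hb hj ha.1 haj).2 ⟨hd, hjd, hdb⟩
      · exact hnc e (mem_glue.2 (Or.inr (Or.inl he)))
    -- `d` would cross `(j, b)` or `(a, j)`, which are then diagonals in the glued set
    exfalso
    obtain ⟨hd₁, hd₂, -, x, hx, hx'⟩ := hd
    have := ha.2 hd₁; have := ha.2 hx; have := hb.2 hx
    rcases (ha.2 hd₁).eq_or_lt with hda | hda
    · have hjb' : IsDiagonal V (j, b) :=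
        ⟨hj, hb.1, ⟨d.2, hd₂, by omega, by omega⟩, a, ha.1, by omega⟩
      exact hnc _ (mem_glue.2 (Or.inr (Or.inr ⟨Or.inr rfl, hjb'⟩)))
        (Or.inl ⟨by omega, by omega, by omega⟩)
    · have haj' : IsDiagonal V (a, j) := ⟨ha.1, hj, ⟨d.1, hd₁, hda, by omega⟩, b, hb.1, by omega⟩
      exact hnc _ (mem_glue.2 (Or.inr (Or.inr ⟨Or.inl rfl, haj'⟩)))
        (Or.inr ⟨hda, by omega, by omega⟩)

theorem isApex_glue {D₁ D₂ : Finset (ℕ × ℕ)} (ha : a ∈ V) (hb : b ∈ V) (hj : j ∈ V)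
    (haj : a < j) (hjb : j < b) : IsApex V (glue V a b j D₁ D₂) a b j := by
  refine ⟨hj, haj, hjb, or_iff_not_imp_right.2 fun hc => ?_, or_iff_not_imp_right.2 fun hc => ?_⟩
  · exact mem_glue.2 (Or.inr (Or.inr ⟨Or.inl rfl, ha, hj, not_not.1 hc, b, hb, Or.inr hjb⟩))
  · exact mem_glue.2 (Or.inr (Or.inr ⟨Or.inr rfl, hj, hb, not_not.1 hc, a, ha, Or.inl haj⟩))

theorem glue_filter_filter (hD : IsTriangulation V D) (ha : a ∈ lowerBounds (V : Set ℕ))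
    (hb : b ∈ upperBounds (V : Set ℕ)) (hj : IsApex V D a b j) :
    glue V a b j {d ∈ D | d.2 ≤ j ∧ d ≠ (a, j)} {d ∈ D | j ≤ d.1 ∧ d ≠ (j, b)} = D := by
  ext d
  simp only [mem_glue, mem_filter]
  constructor
  · rintro (⟨hd, -⟩ | ⟨hd, -⟩ | ⟨rfl | rfl, hd⟩)
    · exact hd
    · exact hd
    · exact hj.2.2.2.1.resolve_right (not_not.2 hd.2.2.1)
    · exact hj.2.2.2.2.resolve_right (not_not.2 hd.2.2.1)
  · intro hd
    have := hD.isDiagonal d hd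
    rcases hj.snd_le_or_le_fst hD ha hb hd with h | h <;> tauto

theorem filter_glue_left {D₁ D₂ : Finset (ℕ × ℕ)} (ha : IsLeast (V : Set ℕ) a)
    (hb : IsGreatest (V : Set ℕ) b) (hj : j ∈ V) (haj : a < j) (hjb : j < b)
    (h₁ : IsTriangulation {x ∈ V | x ≤ j} D₁) (h₂ : IsTriangulation {x ∈ V | j ≤ x} D₂) :
    {d ∈ glue V a b j D₁ D₂ | d.2 ≤ j ∧ d ≠ (a, j)} = D₁ := by
  ext d
  simp only [mem_filter, mem_glue]
  constructor
  · rintro ⟨hd | hd | ⟨rfl | rfl, -⟩, hdj, hne⟩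
    · exact hd
    · have := ((isDiagonal_filter_ge_iff hb hj ha.1 haj).1 (h₂.isDiagonal d hd)).1.lt
      have := ((isDiagonal_filter_ge_iff hb hj ha.1 haj).1 (h₂.isDiagonal d hd)).2.1
      omega
    · exact absurd rfl hne
    · exact absurd hdj (not_le.2 hjb)
  · intro hd
    exact ⟨Or.inl hd, ((isDiagonal_filter_le_iff ha hj hb.1 hjb).1 (h₁.isDiagonal d hd)).2⟩

theorem filter_glue_right {D₁ D₂ : Finset (ℕ × ℕ)} (ha : IsLeast (V : Set ℕ) a)
    (hb : IsGreatest (V : Set ℕ) b) (hj : j ∈ V) (haj : a < j) (hjb : j < b)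
    (h₁ : IsTriangulation {x ∈ V | x ≤ j} D₁) (h₂ : IsTriangulation {x ∈ V | j ≤ x} D₂) :
    {d ∈ glue V a b j D₁ D₂ | j ≤ d.1 ∧ d ≠ (j, b)} = D₂ := by
  ext d
  simp only [mem_filter, mem_glue]
  constructor
  · rintro ⟨hd | hd | ⟨rfl | rfl, -⟩, hjd, hne⟩
    · have := ((isDiagonal_filter_le_iff ha hj hb.1 hjb).1 (h₁.isDiagonal d hd)).1.lt
      have := ((isDiagonal_filter_le_iff ha hj hb.1 hjb).1 (h₁.isDiagonal d hd)).2.1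
      omega
    · exact hd
    · exact absurd hjd (not_le.2 haj)
    · exact absurd rfl hne
  · intro hd
    exact ⟨Or.inr (Or.inl hd), ((isDiagonal_filter_ge_iff hb hj ha.1 haj).1 (h₂.isDiagonal d hd)).2⟩

theorem card_filter_isApex (ha : IsLeast (V : Set ℕ) a) (hb : IsGreatest (V : Set ℕ) b)
    (hj : j ∈ V) (haj : a < j) (hjb : j < b) :
    #{D ∈ triangulations V | IsApex V D a b j} =
      #(triangulations {x ∈ V | x ≤ j}) * #(triangulations {x ∈ V | j ≤ x}) := by
  rw [← card_product]
  refine card_nbij' (fun D => ({d ∈ D | d.2 ≤ j ∧ d ≠ (a, j)}, {d ∈ D | j ≤ d.1 ∧ d ≠ (j, b)}))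
    (fun p => glue V a b j p.1 p.2) (fun D hD => ?_) (fun p hp => ?_) (fun D hD => ?_)
    (fun p hp => ?_)
  · obtain ⟨hD, hjD⟩ := mem_filter.1 hD
    exact mem_product.2 ⟨mem_triangulations.2 ((mem_triangulations.1 hD).filter_le ha hb hjD),
      mem_triangulations.2 ((mem_triangulations.1 hD).filter_ge ha hb hjD)⟩
  · obtain ⟨h₁, h₂⟩ := mem_product.1 hp
    exact mem_filter.2 ⟨mem_triangulations.2 (.glue ha hb hj haj hjb (mem_triangulations.1 h₁)
      (mem_triangulations.1 h₂)), isApex_glue ha.1 hb.1 hj haj hjb⟩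
  · obtain ⟨hD, hjD⟩ := mem_filter.1 hD
    exact glue_filter_filter (mem_triangulations.1 hD) ha.2 hb.2 hjD
  · obtain ⟨h₁, h₂⟩ := mem_product.1 hp
    exact Prod.ext (filter_glue_left ha hb hj haj hjb (mem_triangulations.1 h₁)
      (mem_triangulations.1 h₂)) (filter_glue_right ha hb hj haj hjb (mem_triangulations.1 h₁)
      (mem_triangulations.1 h₂))

theorem IsDiagonal.two_lt_card (hd : IsDiagonal V d) : 2 < #V := by
  obtain ⟨h₁, h₂, ⟨c, hc, hc₁, hc₂⟩, -⟩ := hd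
  exact Finset.two_lt_card.2 ⟨d.1, h₁, c, hc, d.2, h₂, by omega, by omega, by omega⟩

theorem triangulations_of_card_le_two (hV : #V ≤ 2) : triangulations V = {∅} := by
  have hnone : ∀ d, ¬IsDiagonal V d := fun d hd => by have := hd.two_lt_card; omega
  ext D
  rw [mem_triangulations, mem_singleton]
  refine ⟨fun hD => eq_empty_of_forall_notMem fun d hd => hnone d (hD.isDiagonal d hd), ?_⟩
  rintro rfl
  exact ⟨by simp, by simp, fun d hd => absurd hd (hnone d)⟩

theorem card_filter_le_add_card_filter_ge (hj : j ∈ V) :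
    #{x ∈ V | x ≤ j} + #{x ∈ V | j ≤ x} = #V + 1 := by
  have hunion : {x ∈ V | x ≤ j} ∪ {x ∈ V | j ≤ x} = V := by
    ext x
    simp only [mem_union, mem_filter]
    constructor
    · rintro (h | h) <;> exact h.1
    · intro hx
      exact (le_total x j).imp (⟨hx, ·⟩) (⟨hx, ·⟩)
  have hinter : {x ∈ V | x ≤ j} ∩ {x ∈ V | j ≤ x} = {j} := by
    ext x
    simp only [mem_inter, mem_filter, mem_singleton]
    constructor
    · rintro ⟨⟨-, h₁⟩, -, h₂⟩
      omega
    · rintro rfl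
      exact ⟨⟨hj, le_rfl⟩, hj, le_rfl⟩
  rw [← card_union_add_card_inter, hunion, hinter, card_singleton]

theorem card_filter_lt_lt_add_two (ha : IsLeast (V : Set ℕ) a) (hb : IsGreatest (V : Set ℕ) b)
    (hab : a < b) : #{x ∈ V | a < x ∧ x < b} + 2 = #V := by
  have hends : {x ∈ V | ¬(a < x ∧ x < b)} = {a, b} := by
    ext x
    simp only [mem_filter, mem_insert, mem_singleton]
    constructor
    · rintro ⟨hx, h⟩
      have := ha.2 hx; have := hb.2 hx
      omega
    · rintro (rfl | rfl)
      exacts [⟨ha.1, by omega⟩, ⟨hb.1, by omega⟩]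
  rw [← card_pair hab.ne, ← hends, card_filter_add_card_filter_not]

theorem sum_catalan_mul_catalan (ha : IsLeast (V : Set ℕ) a) (hb : IsGreatest (V : Set ℕ) b)
    (hab : a < b) (hV : 3 ≤ #V) :
    ∑ j ∈ V with a < j ∧ j < b, catalan (#{x ∈ V | x ≤ j} - 2) * catalan (#{x ∈ V | j ≤ x} - 2) =
      catalan (#V - 2) := by
  have hI := card_filter_lt_lt_add_two ha hb hab
  set I := {x ∈ V | a < x ∧ x < b}
  have hmono : StrictMonoOn (fun j => #{x ∈ V | x ≤ j}) V := fun x hx y hy hxy =>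
    card_lt_card ⟨monotone_filter_right _ fun _ _ h => h.trans hxy.le,
      fun h => absurd (mem_filter.1 (h (mem_filter.2 ⟨hy, le_rfl⟩))).2 (not_le.2 hxy)⟩
  have hlow : ∀ j ∈ I, 2 ≤ #{x ∈ V | x ≤ j} ∧ 2 ≤ #{x ∈ V | j ≤ x} := fun j hj => by
    obtain ⟨hjV, haj, hjb⟩ := mem_filter.1 hj
    exact ⟨one_lt_card.2 ⟨a, mem_filter.2 ⟨ha.1, haj.le⟩, j, mem_filter.2 ⟨hjV, le_rfl⟩, haj.ne⟩,
      one_lt_card.2 ⟨j, mem_filter.2 ⟨hjV, le_rfl⟩, b, mem_filter.2 ⟨hb.1, hjb.le⟩, hjb.ne⟩⟩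
  set φ : ℕ → ℕ × ℕ := fun j => (#{x ∈ V | x ≤ j} - 2, #{x ∈ V | j ≤ x} - 2)
  have hinj : Set.InjOn φ I := fun x hx y hy hxy => by
    have := hlow x hx; have := hlow y hy
    have := congrArg Prod.fst hxy
    exact hmono.injOn (mem_filter.1 hx).1 (mem_filter.1 hy).1 (by simp only [φ] at this; omega)
  have himage : I.image φ = antidiagonal (#V - 3) := by
    refine eq_of_subset_of_card_le (fun p hp => ?_) ?_
    · obtain ⟨j, hj, rfl⟩ := mem_image.1 hp
      have := hlow j hj
      have := card_filter_le_add_card_filter_ge (mem_filter.1 hj).1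
      simp only [φ, HasAntidiagonal.mem_antidiagonal]
      omega
    · rw [card_image_of_injOn hinj, Nat.card_antidiagonal]
      omega
  rw [show #V - 2 = #V - 3 + 1 by omega, catalan_succ', ← himage, sum_image hinj]

theorem card_triangulations (V : Finset ℕ) : #(triangulations V) = catalan (#V - 2) := by
  induction V using Finset.strongInduction with | H V ih => ?_
  rcases le_or_gt #V 2 with hV | hV
  · rw [triangulations_of_card_le_two hV, card_singleton, show #V - 2 = 0 by omega, catalan_zero]
  have hne : V.Nonempty := card_pos.1 (by omega)
  have hab : V.min' hne < V.max' hne := min'_lt_max'_of_card V (by omega)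
  have ha := isLeast_min' V hne
  have hb := isGreatest_max' V hne
  set a := V.min' hne
  set b := V.max' hne
  have hpart : triangulations V =
      {j ∈ V | a < j ∧ j < b}.biUnion fun j => {D ∈ triangulations V | IsApex V D a b j} := by
    ext D
    simp only [mem_biUnion, mem_filter]
    refine ⟨fun hD => ?_, fun ⟨_, _, hD, _⟩ => hD⟩
    have hmid : ∃ j ∈ V, a < j ∧ j < b := by
      obtain ⟨j, hj⟩ : {x ∈ V | a < x ∧ x < b}.Nonempty :=
        card_pos.1 (by have := card_filter_lt_lt_add_two ha hb hab; omega)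
      exact ⟨j, mem_filter.1 hj⟩
    obtain ⟨j, hj⟩ := (mem_triangulations.1 hD).exists_isApex ha hb hmid
    exact ⟨j, ⟨hj.1, hj.2.1, hj.2.2.1⟩, hD, hj⟩
  have hdisj : Set.PairwiseDisjoint ↑{j ∈ V | a < j ∧ j < b}
      fun j => {D ∈ triangulations V | IsApex V D a b j} := fun x _ y _ hxy =>
    disjoint_filter.2 fun D hD hx hy => hxy (hx.unique (mem_triangulations.1 hD) hy)
  rw [hpart, card_biUnion hdisj, ← sum_catalan_mul_catalan ha hb hab hV]
  refine sum_congr rfl fun j hj => ?_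
  obtain ⟨hjV, haj, hjb⟩ := mem_filter.1 hj
  rw [card_filter_isApex ha hb hjV haj hjb, ih _ ?_, ih _ ?_]
  exacts [filter_ssubset.2 ⟨a, ha.1, not_le.2 haj⟩, filter_ssubset.2 ⟨b, hb.1, not_le.2 hjb⟩]

/-- The diagonal `e` cuts off the vertex `k` alone: no other vertex of `V` lies on its side. -/
def IsEar (V : Finset ℕ) (k : ℕ) (e : ℕ × ℕ) : Prop :=
  IsDiagonal V e ∧ k ∈ V ∧ k ≠ e.1 ∧ k ≠ e.2 ∧
    ∀ x ∈ V, x ≠ e.1 → x ≠ e.2 → (e.1 < x ∧ x < e.2 ↔ e.1 < k ∧ k < e.2) → x = k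

namespace IsEar

theorem isDiagonal_erase_iff (h : IsEar V k e) :
    IsDiagonal (V.erase k) d ↔ IsDiagonal V d ∧ d.1 ≠ k ∧ d.2 ≠ k ∧ d ≠ e := by
  have he := h.1.lt
  obtain ⟨⟨he₁, he₂, -⟩, hk, hk₁, hk₂, hside⟩ := h
  simp only [IsDiagonal, mem_erase, ne_eq, Prod.ext_iff]
  constructor
  · rintro ⟨⟨hd₁k, hd₁⟩, ⟨hd₂k, hd₂⟩, ⟨c, ⟨hck, hc⟩, hc₁, hc₂⟩, x, ⟨hxk, hx⟩, hx'⟩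
    have := hside c hc; have := hside x hx
    exact ⟨⟨hd₁, hd₂, ⟨c, hc, hc₁, hc₂⟩, x, hx, hx'⟩, hd₁k, hd₂k, by omega⟩
  · rintro ⟨⟨hd₁, hd₂, ⟨c, hc, hc₁, hc₂⟩, x, hx, hx'⟩, hd₁k, hd₂k, hne⟩
    have := hside d.1 hd₁; have := hside d.2 hd₂
    refine ⟨⟨hd₁k, hd₁⟩, ⟨hd₂k, hd₂⟩, ?_, ?_⟩
    · by_cases hck : c = k
      · by_cases hp : d.1 < e.1 ∧ e.1 < d.2
        · exact ⟨e.1, ⟨by omega, he₁⟩, hp⟩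
        · exact ⟨e.2, ⟨by omega, he₂⟩, by omega, by omega⟩
      · exact ⟨c, ⟨hck, hc⟩, hc₁, hc₂⟩
    · by_cases hxk : x = k
      · by_cases hp : e.1 < d.1 ∨ d.2 < e.1
        · exact ⟨e.1, ⟨by omega, he₁⟩, hp⟩
        · exact ⟨e.2, ⟨by omega, he₂⟩, by omega⟩
      · exact ⟨x, ⟨hxk, hx⟩, hx'⟩

theorem crosses (h : IsEar V k e) (hd : IsDiagonal V d) (hdk : d.1 = k ∨ d.2 = k) :
    Crosses d e := by
  obtain ⟨-, hk, hk₁, hk₂, hside⟩ := h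
  obtain ⟨hd₁, hd₂, ⟨c, hc, hc₁, hc₂⟩, x, hx, hx'⟩ := hd
  have := hside d.1 hd₁; have := hside d.2 hd₂; have := hside c hc; have := hside x hx
  unfold Crosses
  omega

theorem not_crosses (h : IsEar V k e) (hd : IsDiagonal V d) (hd₁ : d.1 ≠ k) (hd₂ : d.2 ≠ k) :
    ¬Crosses d e ∧ ¬Crosses e d := by
  obtain ⟨-, hk, hk₁, hk₂, hside⟩ := h
  have := hside d.1 hd.1; have := hside d.2 hd.2.1
  unfold Crosses
  omega

end IsEar

theorem IsTriangulation.erase_of_isEar (hD : IsTriangulation V D) (h : IsEar V k e)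
    (he : e ∈ D) : IsTriangulation (V.erase k) (D.erase e) where
  isDiagonal d hd := by
    obtain ⟨hde, hdD⟩ := mem_erase.1 hd
    have hd := hD.isDiagonal d hdD
    refine h.isDiagonal_erase_iff.2 ⟨hd, fun hdk => ?_, fun hdk => ?_, hde⟩
    exacts [hD.not_crosses d hdD e he (h.crosses hd (Or.inl hdk)),
      hD.not_crosses d hdD e he (h.crosses hd (Or.inr hdk))]
  not_crosses d hd f hf := hD.not_crosses d (mem_of_mem_erase hd) f (mem_of_mem_erase hf)
  mem_of_forall_not_crosses d hd hnc := by
    obtain ⟨hdV, hdk₁, hdk₂, hde⟩ := h.isDiagonal_erase_iff.1 hd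
    refine mem_erase.2 ⟨hde, hD.mem_of_forall_not_crosses d hdV fun f hf => ?_⟩
    by_cases hfe : f = e
    · exact hfe ▸ (h.not_crosses hdV hdk₁ hdk₂).1
    · exact hnc f (mem_erase.2 ⟨hfe, hf⟩)

theorem IsTriangulation.insert_of_isEar (hD : IsTriangulation (V.erase k) D) (h : IsEar V k e) :
    IsTriangulation V (insert e D) where
  isDiagonal d hd := by
    rcases mem_insert.1 hd with rfl | hd
    · exact h.1
    · exact (h.isDiagonal_erase_iff.1 (hD.isDiagonal d hd)).1
  not_crosses d hd f hf := by
    have hD_e : ∀ d ∈ D, ¬Crosses d e ∧ ¬Crosses e d := fun d hd => by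
      obtain ⟨hdV, hdk₁, hdk₂, -⟩ := h.isDiagonal_erase_iff.1 (hD.isDiagonal d hd)
      exact h.not_crosses hdV hdk₁ hdk₂
    rcases mem_insert.1 hd with rfl | hdD <;> rcases mem_insert.1 hf with rfl | hfD
    exacts [not_crosses_self, (hD_e f hfD).2, (hD_e d hdD).1, hD.not_crosses d hdD f hfD]
  mem_of_forall_not_crosses d hd hnc := by
    by_cases hde : d = e
    · exact hde ▸ mem_insert_self e D
    by_cases hdk : d.1 = k ∨ d.2 = k
    · exact absurd (h.crosses hd hdk) (hnc e (mem_insert_self e D))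
    exact mem_insert_of_mem (hD.mem_of_forall_not_crosses d
      (h.isDiagonal_erase_iff.2 ⟨hd, (not_or.1 hdk).1, (not_or.1 hdk).2, hde⟩)
      fun f hf => hnc f (mem_insert_of_mem hf))

theorem card_filter_isEar_mem (h : IsEar V k e) {F : Finset (ℕ × ℕ)} (hF : e ∉ F) :
    #{D ∈ triangulations V | e ∈ D ∧ F ⊆ D} = #{D ∈ triangulations (V.erase k) | F ⊆ D} := by
  refine card_nbij' (fun D => D.erase e) (insert e) (fun D hD => ?_) (fun D hD => ?_)
    (fun D hD => ?_) (fun D hD => ?_)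
  · obtain ⟨hD, he, hFD⟩ := mem_filter.1 hD
    exact mem_filter.2 ⟨mem_triangulations.2 ((mem_triangulations.1 hD).erase_of_isEar h he),
      subset_erase.2 ⟨hFD, hF⟩⟩
  · obtain ⟨hD, hFD⟩ := mem_filter.1 hD
    exact mem_filter.2 ⟨mem_triangulations.2 ((mem_triangulations.1 hD).insert_of_isEar h),
      mem_insert_self e D, hFD.trans (subset_insert e D)⟩
  · exact insert_erase (mem_filter.1 hD).2.1
  · obtain ⟨hD, -⟩ := mem_filter.1 hD
    exact erase_insert fun he =>
      (h.isDiagonal_erase_iff.1 ((mem_triangulations.1 hD).isDiagonal e he)).2.2.2 rfl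

theorem isEar_earDiag {m : ℕ} (hV : V ⊆ range m) (hk : k ∈ V) (h₁ : (earDiag m k).1 ∈ V)
    (h₂ : (earDiag m k).2 ∈ V) (hcard : 4 ≤ #V) : IsEar V k (earDiag m k) := by
  have hlt : ∀ x ∈ V, x < m := fun x hx => mem_range.1 (hV hx)
  obtain ⟨c, hc⟩ : (V \ {k, (earDiag m k).1, (earDiag m k).2}).Nonempty := by
    rw [← card_pos]
    have := le_card_sdiff {k, (earDiag m k).1, (earDiag m k).2} V
    have := card_le_three (a := k) (b := (earDiag m k).1) (c := (earDiag m k).2)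
    omega
  simp only [mem_sdiff, mem_insert, mem_singleton, not_or] at hc
  obtain ⟨hc, hck, hc₁, hc₂⟩ := hc
  -- `k` and this fourth vertex `c` lie on opposite sides of the ear diagonal
  have hkm := hlt k hk
  have hcm := hlt c hc
  unfold earDiag at h₁ h₂ hc₁ hc₂ ⊢
  split_ifs at h₁ h₂ hc₁ hc₂ ⊢ with h0 hlast
  · exact ⟨⟨h₁, h₂, ⟨c, hc, by omega, by omega⟩, k, hk, by omega⟩, hk, by omega, by omega,
      fun x hx _ _ _ => by have := hlt x hx; omega⟩
  · exact ⟨⟨h₁, h₂, ⟨c, hc, by omega, by omega⟩, k, hk, by omega⟩, hk, by omega, by omega,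
      fun x hx _ _ _ => by have := hlt x hx; omega⟩
  · exact ⟨⟨h₁, h₂, ⟨k, hk, by omega, by omega⟩, c, hc, by omega⟩, hk, by omega, by omega,
      fun x hx _ _ _ => by omega⟩

theorem earDiag_mem_sdiff {m : ℕ} {K : Finset ℕ} (hK : K ⊆ range m)
    (hadj : ∀ j ∈ K, (j + 1) % m ∉ K) (hk : k ∈ K) :
    (earDiag m k).1 ∈ range m \ K ∧ (earDiag m k).2 ∈ range m \ K := by
  have hkm := mem_range.1 (hK hk)
  have hnext := hadj k hk
  have hprev : ∀ j, (j + 1) % m = k → j ∉ K := fun j hj hjK => hadj j hjK (hj ▸ hk)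
  have hm : 2 ≤ m := by
    by_contra hm
    obtain rfl : m = 1 := by omega
    exact hnext (by rwa [Nat.mod_one, ← Nat.lt_one_iff.1 hkm])
  simp only [mem_sdiff, mem_range]
  unfold earDiag
  split_ifs with h0 hlast
  · subst h0
    rw [Nat.mod_eq_of_lt hm] at hnext
    exact ⟨⟨by omega, hnext⟩, by omega,
      hprev _ (by rw [Nat.sub_add_cancel (by omega), Nat.mod_self])⟩
  · rw [hlast, Nat.sub_add_cancel (by omega), Nat.mod_self] at hnext
    exact ⟨⟨by omega, hnext⟩, by omega, hprev _ (by rw [Nat.mod_eq_of_lt (by omega)]; omega)⟩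
  · rw [Nat.mod_eq_of_lt (by omega)] at hnext
    exact ⟨⟨by omega, hprev _ (by rw [Nat.mod_eq_of_lt (by omega)]; omega)⟩, by omega, hnext⟩

theorem earDiag_injOn {m : ℕ} (hm : 5 ≤ m) : Set.InjOn (earDiag m) (Set.Iio m) := by
  intro j hj j' hj' h
  simp only [Set.mem_Iio] at hj hj'
  unfold earDiag at h
  split_ifs at h <;> simp only [Prod.mk.injEq] at h <;> omega

theorem card_filter_image_earDiag_subset {m : ℕ} {K S T : Finset ℕ} (hK : K ⊆ range m)
    (hadj : ∀ j ∈ K, (j + 1) % m ∉ K) (hm : 2 * #K + 2 ≤ m) (hS : S ⊆ K) (hT : T ⊆ K)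
    (hST : Disjoint S T) :
    #{D ∈ triangulations (range m \ T) | S.image (earDiag m) ⊆ D} =
      catalan (m - #T - #S - 2) := by
  induction S using Finset.induction_on generalizing T with
  | empty =>
    simp only [image_empty, empty_subset, filter_true, card_empty, Nat.sub_zero]
    rw [card_triangulations, card_sdiff_of_subset (hT.trans hK), card_range]
  | insert a S ha ih =>
    have haK := hS (mem_insert_self a S)
    have haT : a ∉ T := disjoint_left.1 hST (mem_insert_self a S)
    have hTK : #T < #K := card_lt_card ⟨hT, fun h => haT (h haK)⟩
    have hear : IsEar (range m \ T) a (earDiag m a) := by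
      obtain ⟨h₁, h₂⟩ := earDiag_mem_sdiff hK hadj haK
      refine isEar_earDiag sdiff_subset (mem_sdiff.2 ⟨hK haK, haT⟩)
        (sdiff_subset_sdiff subset_rfl hT h₁) (sdiff_subset_sdiff subset_rfl hT h₂) ?_
      rw [card_sdiff_of_subset (hT.trans hK), card_range]
      omega
    -- two vertices in `K` force `m ≥ 6`, and there distinct vertices have distinct ears
    have hfresh : earDiag m a ∉ S.image (earDiag m) := fun hmem => by
      obtain ⟨a', ha', heq⟩ := mem_image.1 hmem
      have ha'K := hS (mem_insert_of_mem ha')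
      have : 1 < #K := one_lt_card.2 ⟨a, haK, a', ha'K, fun h => ha (h ▸ ha')⟩
      exact ha (earDiag_injOn (by omega) (mem_range.1 (hK ha'K)) (mem_range.1 (hK haK)) heq ▸ ha')
    rw [image_insert, filter_congr fun D _ => insert_subset_iff, card_filter_isEar_mem hear hfresh,
      ← sdiff_insert, ih (fun x hx => hS (mem_insert_of_mem hx)) (insert_subset haK hT)
        (disjoint_insert_right.2 ⟨ha, disjoint_of_subset_left (subset_insert a S) hST⟩),
      card_insert_of_notMem haT, card_insert_of_notMem ha]
    congr 1
    omega

end ConvexPolygon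

/-- Let `K` be a set of `r ≤ n/2` pairwise non-adjacent
vertices of a convex polygon with `n + 2` vertices, and forbid, for each
`k ∈ K`, the ear diagonal joining the two neighbours of `k`.  The number of
triangulations of the polygon avoiding all `r` forbidden diagonals is
`C_n^{(r)} = Σ_{i=0}^{r} (−1)^i · binomial(r, i) · C_{n−i}`. -/
theorem stmt18 (n r : ℕ) (hr : 2 * r ≤ n) (K : Finset ℕ)
    (hK : K ⊆ Finset.range (n + 2)) (hcard : K.card = r)
    (hadj : ∀ j ∈ K, (j + 1) % (n + 2) ∉ K) :
    (Nat.card {D : Finset (ℕ × ℕ) // IsPolygonTriangulation (n + 2) D ∧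
        ∀ k ∈ K, earDiag (n + 2) k ∉ D} : ℤ) =
      ∑ i ∈ Finset.range (r + 1),
        (-1 : ℤ) ^ i * (r.choose i : ℤ) * (catalan (n - i) : ℤ) := by
  have hcount : ∀ t ∈ K.powerset, #{D ∈ ConvexPolygon.triangulations (range (n + 2)) |
      ∀ k ∈ t, earDiag (n + 2) k ∈ D} = catalan (n - #t) := fun t ht => by
    have := ConvexPolygon.card_filter_image_earDiag_subset hK hadj (by omega)
      (mem_powerset.1 ht) (empty_subset K) (disjoint_empty_right t)
    rwa [sdiff_empty, card_empty, Nat.sub_zero,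
      show n + 2 - #t - 2 = n - #t by omega, filter_congr fun D _ => image_subset_iff] at this
  rw [ConvexPolygon.natCard_isPolygonTriangulation, card_filter_forall_not_eq_sum,
    sum_congr rfl fun t ht => by rw [hcount t ht],
    sum_powerset_apply_card fun i => (-1 : ℤ) ^ i * catalan (n - i), hcard]
  refine sum_congr rfl fun i _ => ?_
  rw [nsmul_eq_mul]
  ring
end

section
/- Let R be a rooted tree (rigid core) in which the root has at most 3 children and every other node has at most 2 children, with λ₁, λ₂, λ₃ edges at levels 1, 2, 3 respectively and ν₂ level-1 nodes having two children. The number of subtrees of R containing the root, counted with weight 4 minus the number of edges (for subtrees with at most 3 edges), equals 4 + binomial(λ₁,3) + λ₁² + 2λ₁ + (λ₁+1)λ₂ + λ₃ + ν₂; moreover if R has m edges and no level-4 edges, this quantity contr⁺(R) is at most (13 + 9m)/2. -/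
/-!
Sort the subtrees with at most three edges by their shape, the numbers of their edges on
levels `1, 2, 3`. Downward closure leaves only the shapes `(k, 0, 0)` with
`k ≤ 3`, `(1, 1, 0)`, `(2, 1, 0)`, `(1, 2, 0)` and `(1, 1, 1)`, realised by
`binom(λ₁, k)`, `λ₂`, `λ₂ (λ₁ - 1)`, `ν₂` and `λ₃` subtrees respectively: a `k`-set of level-1
edges; a level-2 edge with its parent; the same plus another level-1 edge; a level-1 node with
both children; a level-3 path. Weighting and summing gives the formula, and the bound is a
check over `λ₁ ≤ 3` using `λ₂ ≤ 2 λ₁` and `2 ν₂ ≤ λ₂`.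
-/

/-- A *rigid core*: a rooted tree of depth at most `3` in which the root has
at most `3` children (level-1 edges) and every other node has at most `2`
children.  Edges are encoded by the child they lead to: a level-1 edge is an
element of `Fin 3`, a level-2 edge is a level-1 edge together with an element
of `Fin 2`, and similarly for level-3 edges. -/
structure CoreTree where
  L1 : Finset (Fin 3)
  L2 : Finset (Fin 3 × Fin 2)
  L3 : Finset ((Fin 3 × Fin 2) × Fin 2)
  closed2 : ∀ e ∈ L2, e.1 ∈ L1
  closed3 : ∀ e ∈ L3, e.1 ∈ L2

/-- A subtree of `t` containing the root: a downward-closed collection of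
edges of `t`. -/
def IsSubtree (t : CoreTree)
    (s : Finset (Fin 3) × Finset (Fin 3 × Fin 2) × Finset ((Fin 3 × Fin 2) × Fin 2)) :
    Prop :=
  s.1 ⊆ t.L1 ∧ s.2.1 ⊆ t.L2 ∧ s.2.2 ⊆ t.L3 ∧
    (∀ e ∈ s.2.1, e.1 ∈ s.1) ∧ (∀ e ∈ s.2.2, e.1 ∈ s.2.1)

/-- The number of subtrees of `t` containing the root and having exactly `j`
edges. -/
noncomputable def subtreeCount (t : CoreTree) (j : ℕ) : ℕ :=
  Nat.card {s : Finset (Fin 3) × Finset (Fin 3 × Fin 2) ×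
      Finset ((Fin 3 × Fin 2) × Fin 2) //
    IsSubtree t s ∧ s.1.card + s.2.1.card + s.2.2.card = j}

/-- `ν₂ t` is the number of level-1 nodes of `t` having two child-edges. -/
def nu2 (t : CoreTree) : ℕ :=
  (t.L1.filter fun a => (a, 0) ∈ t.L2 ∧ (a, 1) ∈ t.L2).card

open Finset

lemma Finset.eq_singleton_of_mem_of_card_eq_one {α : Type*} {s : Finset α} {a : α}
    (ha : a ∈ s) (h : #s = 1) : s = {a} :=
  (eq_of_subset_of_card_le (singleton_subset_iff.2 ha) (by simp [h])).symm

abbrev EdgeSets :=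
  Finset (Fin 3) × Finset (Fin 3 × Fin 2) × Finset ((Fin 3 × Fin 2) × Fin 2)

-- Filtering `t`'s own powersets rather than `univ` keeps `whnf` from enumerating all `2 ^ 21`
-- edge sets.
def subtrees (t : CoreTree) : Finset EdgeSets :=
  {s ∈ t.L1.powerset ×ˢ t.L2.powerset ×ˢ t.L3.powerset |
    (∀ e ∈ s.2.1, e.1 ∈ s.1) ∧ ∀ e ∈ s.2.2, e.1 ∈ s.2.1}

def shape (s : EdgeSets) : ℕ × ℕ × ℕ := (#s.1, #s.2.1, #s.2.2)

def subtreesOfShape (t : CoreTree) (p : ℕ × ℕ × ℕ) : Finset EdgeSets :=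
  {s ∈ subtrees t | shape s = p}

section
variable {t : CoreTree} {s : EdgeSets}

lemma mem_subtrees : s ∈ subtrees t ↔ IsSubtree t s := by
  simp [subtrees, IsSubtree, and_assoc]

lemma mem_subtreesOfShape {a b c : ℕ} :
    s ∈ subtreesOfShape t (a, b, c) ↔ IsSubtree t s ∧ #s.1 = a ∧ #s.2.1 = b ∧ #s.2.2 = c := by
  simp [subtreesOfShape, mem_subtrees, shape]

lemma IsSubtree.card_level1_pos (hs : IsSubtree t s) (h : 0 < #s.2.1) : 0 < #s.1 := by
  obtain ⟨e, he⟩ := card_pos.1 h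
  exact card_pos.2 ⟨e.1, hs.2.2.2.1 e he⟩

lemma IsSubtree.card_level2_pos (hs : IsSubtree t s) (h : 0 < #s.2.2) : 0 < #s.2.1 := by
  obtain ⟨f, hf⟩ := card_pos.1 h
  exact card_pos.2 ⟨f.1, hs.2.2.2.2 f hf⟩

end

lemma subtreeCount_eq_sum_card_subtreesOfShape (t : CoreTree) (j : ℕ) (P : Finset (ℕ × ℕ × ℕ))
    (hP : ∀ p ∈ P, p.1 + p.2.1 + p.2.2 = j)
    (hshape : ∀ s, IsSubtree t s → #s.1 + #s.2.1 + #s.2.2 = j → shape s ∈ P) :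
    subtreeCount t j = ∑ p ∈ P, #(subtreesOfShape t p) := by
  rw [subtreeCount,
    Nat.subtype_card {s ∈ subtrees t | #s.1 + #s.2.1 + #s.2.2 = j} (by simp [mem_subtrees]),
    card_eq_sum_card_fiberwise (f := shape) (t := P) fun s hs => by
      simp only [coe_filter, Set.mem_ofPred_eq, mem_subtrees] at hs
      exact hshape s hs.1 hs.2]
  refine sum_congr rfl fun p hp => ?_
  rw [subtreesOfShape, filter_filter]
  refine congrArg card (filter_congr fun s _ => ?_)
  constructor
  · rintro ⟨-, rfl⟩
    rfl
  · rintro rfl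
    exact ⟨hP _ hp, rfl⟩

lemma card_subtreesOfShape_level1 (t : CoreTree) (k : ℕ) :
    #(subtreesOfShape t (k, 0, 0)) = (#t.L1).choose k := by
  rw [← card_powersetCard]
  symm
  refine card_nbij' (fun P => (P, ∅, ∅)) (fun s => s.1) ?_ ?_ ?_ ?_
  · intro P hP
    simp_all [mem_subtreesOfShape, IsSubtree]
  · intro s hs
    simp_all [mem_subtreesOfShape, IsSubtree]
  · intro P _
    rfl
  · rintro ⟨s₁, s₂, s₃⟩ hs
    simp_all [mem_subtreesOfShape]

lemma card_subtreesOfShape_one_one_zero (t : CoreTree) :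
    #(subtreesOfShape t (1, 1, 0)) = #t.L2 := by
  symm
  refine card_bij (fun e _ => ({e.1}, {e}, ∅)) ?_ ?_ ?_
  · intro e he
    simp [mem_subtreesOfShape, IsSubtree, he, t.closed2 e he]
  · intro e _ e' _ h
    simp_all
  · rintro ⟨s₁, s₂, s₃⟩ hs
    obtain ⟨hs, c₁, c₂, c₃⟩ := mem_subtreesOfShape.1 hs
    obtain ⟨e, rfl⟩ := card_eq_one.1 c₂
    obtain rfl := card_eq_zero.1 c₃
    obtain rfl := eq_singleton_of_mem_of_card_eq_one (hs.2.2.2.1 e (mem_singleton_self e)) c₁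
    exact ⟨e, hs.2.1 (mem_singleton_self e), rfl⟩

lemma card_subtreesOfShape_two_one_zero (t : CoreTree) :
    #(subtreesOfShape t (2, 1, 0)) = #t.L2 * (#t.L1 - 1) := by
  have : #(t.L2.sigma fun e => t.L1.erase e.1) = #t.L2 * (#t.L1 - 1) := by
    rw [card_sigma, sum_congr rfl fun e he => card_erase_of_mem (t.closed2 e he), sum_const,
      smul_eq_mul]
  rw [← this]
  symm
  refine card_bij (fun x _ => ({x.1.1, x.2}, {x.1}, ∅)) ?_ ?_ ?_
  · rintro ⟨e, a⟩ hx
    simp only [mem_sigma, mem_erase] at hx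
    obtain ⟨he, hae, ha⟩ := hx
    simp [mem_subtreesOfShape, IsSubtree, insert_subset_iff, he, ha, t.closed2 e he,
      card_insert_of_notMem, Ne.symm hae]
  · rintro ⟨e, a⟩ hx ⟨e', a'⟩ - h
    simp only [Prod.mk.injEq, singleton_inj] at h
    obtain ⟨h₁, rfl, -⟩ := h
    have ha : a ∈ ({e.1, a'} : Finset (Fin 3)) := h₁ ▸ by simp
    simp only [mem_insert, mem_singleton] at ha
    rw [ha.resolve_left (mem_erase.1 (mem_sigma.1 hx).2).1]
  · rintro ⟨s₁, s₂, s₃⟩ hs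
    obtain ⟨hs, c₁, c₂, c₃⟩ := mem_subtreesOfShape.1 hs
    obtain ⟨e, rfl⟩ := card_eq_one.1 c₂
    obtain rfl := card_eq_zero.1 c₃
    have he₁ : e.1 ∈ s₁ := hs.2.2.2.1 e (mem_singleton_self e)
    obtain ⟨a, ha⟩ := card_eq_one.1 (by rw [card_erase_of_mem he₁, c₁] : #(s₁.erase e.1) = 1)
    have ha' : a ∈ s₁.erase e.1 := ha ▸ mem_singleton_self a
    refine ⟨⟨e, a⟩, ?_, ?_⟩
    · simp only [mem_sigma, mem_erase]
      exact ⟨hs.2.1 (mem_singleton_self e), (mem_erase.1 ha').1, hs.1 (mem_erase.1 ha').2⟩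
    · rw [← ha, insert_erase he₁]

lemma card_subtreesOfShape_one_two_zero (t : CoreTree) :
    #(subtreesOfShape t (1, 2, 0)) = nu2 t := by
  symm
  refine card_bij (fun a _ => ({a}, {(a, 0), (a, 1)}, ∅)) ?_ ?_ ?_
  · intro a ha
    simp only [mem_filter] at ha
    simp [mem_subtreesOfShape, IsSubtree, insert_subset_iff, ha]
  · intro a _ a' _ h
    simp_all
  · rintro ⟨s₁, s₂, s₃⟩ hs
    obtain ⟨hs, c₁, c₂, c₃⟩ := mem_subtreesOfShape.1 hs
    obtain ⟨a, rfl⟩ := card_eq_one.1 c₁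
    obtain rfl := card_eq_zero.1 c₃
    have hsub : s₂ ⊆ {(a, 0), (a, 1)} := by
      rintro ⟨b, i⟩ hb
      obtain rfl : b = a := mem_singleton.1 (hs.2.2.2.1 _ hb)
      fin_cases i <;> simp
    obtain rfl := eq_of_subset_of_card_le hsub (by rw [c₂]; exact card_le_two)
    refine ⟨a, ?_, rfl⟩
    simp only [mem_filter]
    exact ⟨hs.1 (mem_singleton_self a), hs.2.1 (by simp), hs.2.1 (by simp)⟩

lemma card_subtreesOfShape_one_one_one (t : CoreTree) :
    #(subtreesOfShape t (1, 1, 1)) = #t.L3 := by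
  symm
  refine card_bij (fun f _ => ({f.1.1}, {f.1}, {f})) ?_ ?_ ?_
  · intro f hf
    simp [mem_subtreesOfShape, IsSubtree, hf, t.closed3 f hf, t.closed2 _ (t.closed3 f hf)]
  · intro f _ f' _ h
    simp_all
  · rintro ⟨s₁, s₂, s₃⟩ hs
    obtain ⟨hs, c₁, c₂, c₃⟩ := mem_subtreesOfShape.1 hs
    obtain ⟨f, rfl⟩ := card_eq_one.1 c₃
    obtain rfl := eq_singleton_of_mem_of_card_eq_one (hs.2.2.2.2 f (mem_singleton_self f)) c₂
    obtain rfl := eq_singleton_of_mem_of_card_eq_one (hs.2.2.2.1 _ (mem_singleton_self f.1)) c₁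
    exact ⟨f, hs.2.2.1 (mem_singleton_self f), rfl⟩

lemma subtreeCount_zero (t : CoreTree) : subtreeCount t 0 = 1 := by
  rw [subtreeCount_eq_sum_card_subtreesOfShape t 0 {(0, 0, 0)} (by simp) fun s hs h => ?_]
  · simp [card_subtreesOfShape_level1]
  · simp only [shape, mem_singleton, Prod.mk.injEq]
    omega

lemma subtreeCount_one (t : CoreTree) : subtreeCount t 1 = #t.L1 := by
  rw [subtreeCount_eq_sum_card_subtreesOfShape t 1 {(1, 0, 0)} (by simp) fun s hs h => ?_]
  · simp [card_subtreesOfShape_level1]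
  · have := hs.card_level1_pos
    have := hs.card_level2_pos
    simp only [shape, mem_singleton, Prod.mk.injEq]
    omega

lemma subtreeCount_two (t : CoreTree) :
    subtreeCount t 2 = (#t.L1).choose 2 + #t.L2 := by
  rw [subtreeCount_eq_sum_card_subtreesOfShape t 2 {(2, 0, 0), (1, 1, 0)} (by simp)
    fun s hs h => ?_]
  · simp [card_subtreesOfShape_level1, card_subtreesOfShape_one_one_zero]
  · have := hs.card_level1_pos
    have := hs.card_level2_pos
    simp only [shape, mem_insert, mem_singleton, Prod.mk.injEq]
    omega

lemma subtreeCount_three (t : CoreTree) :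
    subtreeCount t 3 = (#t.L1).choose 3 + #t.L2 * (#t.L1 - 1) + nu2 t + #t.L3 := by
  rw [subtreeCount_eq_sum_card_subtreesOfShape t 3 {(3, 0, 0), (2, 1, 0), (1, 2, 0), (1, 1, 1)}
    (by simp) fun s hs h => ?_]
  · simp [card_subtreesOfShape_level1, card_subtreesOfShape_two_one_zero,
      card_subtreesOfShape_one_two_zero, card_subtreesOfShape_one_one_one, add_assoc]
  · have := hs.card_level1_pos
    have := hs.card_level2_pos
    simp only [shape, mem_insert, mem_singleton, Prod.mk.injEq]
    omega

lemma card_L1_le (t : CoreTree) : #t.L1 ≤ 3 :=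
  (card_le_univ _).trans_eq (Fintype.card_fin 3)

lemma card_L2_le (t : CoreTree) : #t.L2 ≤ 2 * #t.L1 :=
  calc #t.L2 ≤ #(t.L1 ×ˢ (univ : Finset (Fin 2))) :=
        card_le_card fun e he => mem_product.2 ⟨t.closed2 e he, mem_univ _⟩
    _ = 2 * #t.L1 := by simp [mul_comm]

lemma two_mul_nu2_le (t : CoreTree) : 2 * nu2 t ≤ #t.L2 :=
  calc 2 * nu2 t
      = #((t.L1.filter fun a => (a, 0) ∈ t.L2 ∧ (a, 1) ∈ t.L2) ×ˢ (univ : Finset (Fin 2))) := by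
        simp [nu2, mul_comm]
    _ ≤ #t.L2 := card_le_card fun ⟨a, i⟩ h => by
        simp only [mem_product, mem_filter, mem_univ, and_true] at h
        fin_cases i
        exacts [h.2.1, h.2.2]

lemma weighted_count_eq {l₁ l₂ : ℕ} (l₃ n : ℕ) (h₁ : l₁ ≤ 3) (h₂ : l₂ ≤ 2 * l₁) :
    4 + 3 * l₁ + 2 * (l₁.choose 2 + l₂) + (l₁.choose 3 + l₂ * (l₁ - 1) + n + l₃) =
      4 + l₁.choose 3 + l₁ ^ 2 + 2 * l₁ + (l₁ + 1) * l₂ + l₃ + n := by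
  interval_cases l₁ <;> simp [Nat.choose] <;> omega

lemma two_mul_weighted_count_le {l₁ l₂ n : ℕ} (l₃ : ℕ) (h₁ : l₁ ≤ 3) (h₂ : l₂ ≤ 2 * l₁)
    (hn : 2 * n ≤ l₂) :
    2 * (4 + l₁.choose 3 + l₁ ^ 2 + 2 * l₁ + (l₁ + 1) * l₂ + l₃ + n) ≤
      13 + 9 * (l₁ + l₂ + l₃) := by
  interval_cases l₁ <;> simp [Nat.choose] <;> omega

/-- For a rigid core `R` with `λ₁, λ₂, λ₃` edges at levels
`1, 2, 3` and `ν₂` level-1 nodes with two children: the number of subtrees of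
`R` containing the root, counted with weight `4` minus the number of edges
(i.e. `Σ_{j=0}^{3} (4−j) · #(j-edge subtrees)`), equals
`4 + binom(λ₁,3) + λ₁² + 2λ₁ + (λ₁+1)λ₂ + λ₃ + ν₂`; moreover, if `R` has `m`
edges (and no level-4 edges), this quantity `contr⁺(R)` is at most
`(13 + 9m)/2`. -/
theorem stmt19 (t : CoreTree) :
    (∑ j ∈ Finset.range 4, (4 - j) * subtreeCount t j =
      4 + (t.L1.card.choose 3) + t.L1.card ^ 2 + 2 * t.L1.card +
        (t.L1.card + 1) * t.L2.card + t.L3.card + nu2 t) ∧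
    2 * (4 + (t.L1.card.choose 3) + t.L1.card ^ 2 + 2 * t.L1.card +
        (t.L1.card + 1) * t.L2.card + t.L3.card + nu2 t) ≤
      13 + 9 * (t.L1.card + t.L2.card + t.L3.card) := by
  have hcontr : ∑ j ∈ range 4, (4 - j) * subtreeCount t j =
      4 + 3 * #t.L1 + 2 * ((#t.L1).choose 2 + #t.L2) +
        ((#t.L1).choose 3 + #t.L2 * (#t.L1 - 1) + nu2 t + #t.L3) := by
    simp [sum_range_succ, subtreeCount_zero, subtreeCount_one, subtreeCount_two,
      subtreeCount_three]
  rw [hcontr, weighted_count_eq _ _ (card_L1_le t) (card_L2_le t)]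
  exact ⟨rfl, two_mul_weighted_count_le _ (card_L1_le t) (card_L2_le t) (two_mul_nu2_le t)⟩
end
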